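/- arXiv:2303.01039 — 10 statements merged into one kernel-verified Lean document; each statement's English description precedes it below -/
import Mathlib

section
/- Let G be an abelian group and let u, v ∈ G be such that the only integers m, n with mu + nv = 0 are m = n = 0. Set M = {mu + nv : m, n ∈ ℤ, m ≥ 1} ∪ {nv : n ∈ ℤ, n ≥ 0}. Then M is a reduced submonoid of G, v is the unique atom of M, and M is not atomic. -/
/-- A subset `S` of an abelian group is a submonoid if it contains `0`
and is closed under addition. -/
def IsSubmonoidSet {G : Type*} [AddCommGroup G] (S : Set G) : Prop :=
  (0 : G) ∈ S ∧ ∀ a ∈ S, ∀ b ∈ S, a + b ∈ S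

/-- `a` is an atom of the (sub)monoid `S`: it belongs to `S`, is not invertible in `S`,
and whenever `a = b + c` with `b, c ∈ S`, one of `b`, `c` is invertible in `S`. -/
def IsAtomIn {G : Type*} [AddCommGroup G] (S : Set G) (a : G) : Prop :=
  a ∈ S ∧ -a ∉ S ∧ ∀ b ∈ S, ∀ c ∈ S, a = b + c → (-b ∈ S ∨ -c ∈ S)

/-- `S` is atomic: every non-invertible element of `S` is a finite sum of atoms of `S`. -/
def IsAtomicSet {G : Type*} [AddCommGroup G] (S : Set G) : Prop :=
  ∀ a ∈ S, -a ∉ S → ∃ l : Multiset G, (∀ x ∈ l, IsAtomIn S x) ∧ l.sum = a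

/-- The principal ideal `b + S` of the (sub)monoid `S`. -/
def setIdeal {G : Type*} [AddCommGroup G] (S : Set G) (b : G) : Set G :=
  {x | ∃ m ∈ S, x = b + m}

/-- `S` satisfies the ACCP: every ascending chain of principal ideals of `S` stabilizes. -/
def SatisfiesACCPSet {G : Type*} [AddCommGroup G] (S : Set G) : Prop :=
  ∀ b : ℕ → G, (∀ n, b n ∈ S) →
    (∀ n, setIdeal S (b n) ⊆ setIdeal S (b (n + 1))) →
    ∃ N, ∀ n, N ≤ n → setIdeal S (b n) = setIdeal S (b N)

/-- If `u, v` are integrally independent elements of an abelian group `G`,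
then `M = {mu + nv : m ≥ 1, n ∈ ℤ} ∪ {nv : n ≥ 0}` is a reduced submonoid of `G`, `v` is its
unique atom, and `M` is not atomic. -/
theorem lex_cone_not_atomic {G : Type*} [AddCommGroup G] (u v : G)
    (h : ∀ m n : ℤ, m • u + n • v = 0 → m = 0 ∧ n = 0) :
    let M : Set G := {x | ∃ m n : ℤ, 1 ≤ m ∧ x = m • u + n • v} ∪
      {x | ∃ n : ℤ, 0 ≤ n ∧ x = n • v}
    IsSubmonoidSet M ∧ (∀ a ∈ M, -a ∈ M → a = 0) ∧
      {a : G | IsAtomIn M a} = {v} ∧ ¬ IsAtomicSet M := by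
  intro M
  have memM : ∀ a : G, a ∈ M ↔
      (∃ m n : ℤ, 1 ≤ m ∧ a = m • u + n • v) ∨ (∃ n : ℤ, 0 ≤ n ∧ a = n • v) :=
    fun a => Iff.rfl
  have key : ∀ m₁ n₁ m₂ n₂ : ℤ, m₁ • u + n₁ • v = m₂ • u + n₂ • v →
      m₁ = m₂ ∧ n₁ = n₂ := by
    intro m₁ n₁ m₂ n₂ he
    have e0 : (m₁ - m₂) • u + (n₁ - n₂) • v = 0 := by
      simp only [sub_smul]
      rw [show m₁•u - m₂•u + (n₁•v - n₂•v) = (m₁•u + n₁•v) - (m₂•u + n₂•v) by abel,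
        he, sub_self]
    obtain ⟨h1, h2⟩ := h _ _ e0
    omega
  -- membership of v and u
  have hvM : v ∈ M := (memM v).mpr (Or.inr ⟨1, by norm_num, (one_smul ℤ v).symm⟩)
  have huM : u ∈ M := (memM u).mpr (Or.inl ⟨1, 0, le_refl 1, by simp⟩)
  have h0M : (0:G) ∈ M := (memM 0).mpr (Or.inr ⟨0, le_refl 0, by simp⟩)
  -- submonoid
  have hsub : IsSubmonoidSet M := by
    refine ⟨h0M, ?_⟩
    intro a ha b hb
    rcases (memM a).mp ha with ⟨m₁, n₁, hm₁, rfl⟩ | ⟨n₁, hn₁, rfl⟩ <;>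
      rcases (memM b).mp hb with ⟨m₂, n₂, hm₂, rfl⟩ | ⟨n₂, hn₂, rfl⟩
    · exact (memM _).mpr (Or.inl ⟨m₁+m₂, n₁+n₂, by omega, by
        simp only [add_smul]; try abel⟩)
    · exact (memM _).mpr (Or.inl ⟨m₁, n₁+n₂, hm₁, by
        simp only [add_smul]; try abel⟩)
    · exact (memM _).mpr (Or.inl ⟨m₂, n₁+n₂, hm₂, by
        simp only [add_smul]; try abel⟩)
    · exact (memM _).mpr (Or.inr ⟨n₁+n₂, by omega, by
        simp only [add_smul]; try abel⟩)
  -- reduced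
  have hred : ∀ a ∈ M, -a ∈ M → a = 0 := by
    intro a ha hna
    rcases (memM a).mp ha with ⟨m₁, n₁, hm₁, rfl⟩ | ⟨n₁, hn₁, rfl⟩ <;>
      rcases (memM _).mp hna with ⟨m₂, n₂, hm₂, he⟩ | ⟨n₂, hn₂, he⟩
    · exfalso
      have : (m₁ + m₂) • u + (n₁ + n₂) • v = (0:ℤ) • u + (0:ℤ) • v := by
        simp only [add_smul, zero_smul, add_zero]
        rw [show m₁•u + m₂•u + (n₁•v + n₂•v) = (m₁•u + n₁•v) + (m₂•u + n₂•v) by abel,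
          ← he, add_neg_cancel]
      have := key _ _ _ _ this
      omega
    · exfalso
      have : m₁ • u + (n₁ + n₂) • v = (0:ℤ) • u + (0:ℤ) • v := by
        simp only [add_smul, zero_smul, add_zero]
        rw [show m₁•u + (n₁•v + n₂•v) = (m₁•u + n₁•v) + n₂•v by abel, ← he,
          add_neg_cancel]
      have := key _ _ _ _ this
      omega
    · exfalso
      have : m₂ • u + (n₁ + n₂) • v = (0:ℤ) • u + (0:ℤ) • v := by
        simp only [add_smul, zero_smul, add_zero]
        rw [show m₂•u + (n₁•v + n₂•v) = n₁•v + (m₂•u + n₂•v) by abel, ← he,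
          add_neg_cancel]
      have := key _ _ _ _ this
      omega
    · have : (0:ℤ) • u + (n₁ + n₂) • v = (0:ℤ) • u + (0:ℤ) • v := by
        simp only [add_smul, zero_smul, zero_add, add_zero]
        rw [← he, add_neg_cancel]
      have := key _ _ _ _ this
      have : n₁ = 0 := by omega
      simp [this]
  -- -v ∉ M
  have hvn : -v ∉ M := by
    intro hc
    rcases (memM _).mp hc with ⟨m₂, n₂, hm₂, he⟩ | ⟨n₂, hn₂, he⟩
    · have : m₂ • u + (n₂ + 1) • v = (0:ℤ) • u + (0:ℤ) • v := by
        simp only [add_smul, one_smul, zero_smul, add_zero]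
        rw [show m₂•u + (n₂•v + v) = (m₂•u + n₂•v) + v by abel, ← he, neg_add_cancel]
      have := key _ _ _ _ this
      omega
    · have : (0:ℤ) • u + (n₂ + 1) • v = (0:ℤ) • u + (0:ℤ) • v := by
        simp only [add_smul, one_smul, zero_smul, zero_add, add_zero]
        rw [← he, neg_add_cancel]
      have := key _ _ _ _ this
      omega
  have hvatom : IsAtomIn M v := by
    refine ⟨hvM, hvn, ?_⟩
    intro b hb c hc he
    rcases (memM b).mp hb with ⟨m₁, n₁, hm₁, rfl⟩ | ⟨n₁, hn₁, rfl⟩ <;>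
      rcases (memM c).mp hc with ⟨m₂, n₂, hm₂, rfl⟩ | ⟨n₂, hn₂, rfl⟩
    · exfalso
      have : (m₁+m₂) • u + (n₁+n₂) • v = (0:ℤ) • u + (1:ℤ) • v := by
        simp only [add_smul, one_smul, zero_smul, zero_add]
        rw [show m₁•u + m₂•u + (n₁•v + n₂•v) = m₁•u + n₁•v + (m₂•u + n₂•v) by abel, ← he]
      have := key _ _ _ _ this
      omega
    · exfalso
      have : m₁ • u + (n₁+n₂) • v = (0:ℤ) • u + (1:ℤ) • v := by
        simp only [add_smul, one_smul, zero_smul, zero_add]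
        rw [show m₁•u + (n₁•v + n₂•v) = m₁•u + n₁•v + n₂•v by abel, ← he]
      have := key _ _ _ _ this
      omega
    · exfalso
      have : m₂ • u + (n₁+n₂) • v = (0:ℤ) • u + (1:ℤ) • v := by
        simp only [add_smul, one_smul, zero_smul, zero_add]
        rw [show m₂•u + (n₁•v + n₂•v) = n₁•v + (m₂•u + n₂•v) by abel, ← he]
      have := key _ _ _ _ this
      omega
    · have : (0:ℤ) • u + (n₁+n₂) • v = (0:ℤ) • u + (1:ℤ) • v := by
        simp only [add_smul, one_smul, zero_smul, zero_add]
        rw [← he]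
      have h12 := key _ _ _ _ this
      have : n₁ = 0 ∨ n₂ = 0 := by omega
      rcases this with rfl | rfl
      · left; simpa using h0M
      · right; simpa using h0M
  -- atoms = {v}
  have hatoms : {a : G | IsAtomIn M a} = {v} := by
    ext a
    simp only [Set.mem_setOf_eq, Set.mem_singleton_iff]
    constructor
    · rintro ⟨haM, hnaM, hsplit⟩
      rcases (memM a).mp haM with ⟨m, n, hm, rfl⟩ | ⟨n, hn, rfl⟩
      · exfalso
        have hbM : m • u + (n - 1) • v ∈ M := (memM _).mpr (Or.inl ⟨m, n-1, hm, rfl⟩)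
        have hd : m • u + n • v = (m • u + (n - 1) • v) + v := by
          simp only [sub_smul, one_smul]; abel
        rcases hsplit _ hbM _ hvM hd with hb | hc
        · have := hred _ hbM hb
          have := key _ _ _ _ (by rw [this]; simp : m • u + (n-1) • v = (0:ℤ) • u + (0:ℤ) • v)
          omega
        · exact hvn hc
      · -- a = n • v
        rcases lt_or_ge n 2 with hn2 | hn2
        · have hn1 : n = 0 ∨ n = 1 := by omega
          rcases hn1 with rfl | rfl
          · exact absurd (by simpa using h0M) hnaM
          · simp
        · exfalso
          have hcM : (n-1) • v ∈ M := (memM _).mpr (Or.inr ⟨n-1, by omega, rfl⟩)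
          have hd : n • v = v + (n - 1) • v := by
            simp only [sub_smul, one_smul]; abel
          rcases hsplit _ hvM _ hcM hd with hb | hc
          · exact hvn hb
          · have := hred _ hcM hc
            have := key _ _ _ _
              (by rw [this]; simp : (0:ℤ) • u + (n-1) • v = (0:ℤ) • u + (0:ℤ) • v)
            omega
    · rintro rfl
      exact hvatom
  refine ⟨hsub, hred, hatoms, ?_⟩
  -- not atomic
  intro hat
  have hnu : -u ∉ M := by
    intro hc
    have := hred _ huM hc
    have := key _ _ _ _ (by rw [this]; simp : (1:ℤ) • u + (0:ℤ) • v = (0:ℤ) • u + (0:ℤ) • v)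
    omega
  obtain ⟨l, hl, hsum⟩ := hat u huM hnu
  have hall : ∀ x ∈ l, x = v := by
    intro x hx
    have := hl x hx
    have : x ∈ ({a : G | IsAtomIn M a}) := this
    rw [hatoms] at this
    exact this
  have hrep : l = Multiset.replicate l.card v := Multiset.eq_replicate_card.mpr hall
  have : u = (l.card : ℤ) • v := by
    rw [← hsum, hrep, Multiset.sum_replicate, Multiset.card_replicate]
    simp [natCast_zsmul]
  have := key 1 0 0 (l.card) (by simp [← this])
  omega
end

section
/- Let (p_n)_{n≥1} be the strictly increasing enumeration of all odd primes, and let M be the submonoid of (ℚ, +) generated by the set {1/(2^{n-1} p_n) : n ∈ ℕ, n ≥ 1}. Then M is atomic, the set of atoms of M is exactly {1/(2^{n-1} p_n) : n ≥ 1}, and M does not satisfy the ACCP (for instance, (1/2^n + M)_{n≥1} is an ascending chain of principal ideals of M that does not stabilize). -/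
/-- The strictly increasing enumeration of the odd primes: for `n ≥ 1`,
`oddPrime n = Nat.nth Nat.Prime n` is the `n`-th odd prime (since `Nat.nth Nat.Prime 0 = 2`). -/
noncomputable def oddPrime (n : ℕ) : ℕ := Nat.nth Nat.Prime n

/-- The generating set `{1/(2^(n-1) p_n) : n ≥ 1}` of Grams' monoid. -/
noncomputable def gramsGen : Set ℚ :=
  {q | ∃ n : ℕ, 1 ≤ n ∧ q = 1 / (2 ^ (n - 1) * (oddPrime n : ℚ))}

/-- Grams' monoid: the submonoid of `(ℚ, +)` generated by `{1/(2^(n-1) p_n) : n ≥ 1}`. -/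
noncomputable def gramsM : Set ℚ := ↑(AddSubmonoid.closure gramsGen)

/-!
The odd prime `p_n` divides the denominator of the `n`-th generator `1/(2^(n-1) p_n)` and of no
other generator, and denominators prime to `p_n` are stable under addition. Hence no generator is
a sum of the others, and as `M` is positive this makes every generator an atom: `M` is atomic with
exactly these atoms. Yet `1/2^n = p_(n+1) • 1/(2^n p_(n+1))` lies in `M`, and since
`1/2^n - 1/2^(n+1) = 1/2^(n+1) ∈ M` while `1/2^(n+1) < 1/2^n`, the ideals `1/2^n + M` strictly
increase.
-/

open AddSubmonoid

section Atoms

variable {G : Type*} [AddCommGroup G] {S : Set G}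

lemma mem_closure_diff_singleton_or_sub_mem (g : G) {b : G}
    (hb : b ∈ closure S) : b ∈ closure (S \ {g}) ∨ b - g ∈ closure S := by
  induction hb using closure_induction with
  | mem x hx =>
    by_cases hxg : x = g
    · exact Or.inr (by simp [hxg])
    · exact Or.inl (subset_closure ⟨hx, hxg⟩)
  | zero => exact Or.inl (zero_mem _)
  | add x y hx hy ihx ihy =>
    rcases ihx with hx' | hx'
    · rcases ihy with hy' | hy'
      · exact Or.inl (add_mem hx' hy')
      · exact Or.inr (by simpa [add_sub_assoc] using add_mem hx hy')
    · exact Or.inr (by simpa [sub_add_eq_add_sub] using add_mem hx' hy)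

lemma isAtomIn_closure_of_notMem_closure_diff {g : G} (hg : g ∈ S) (hneg : -g ∉ closure S)
    (hdiff : g ∉ closure (S \ {g})) : IsAtomIn (closure S : Set G) g := by
  refine ⟨subset_closure hg, hneg, fun b hb c hc hbc => ?_⟩
  rcases mem_closure_diff_singleton_or_sub_mem g hb with hb' | hb'
  · rcases mem_closure_diff_singleton_or_sub_mem g hc with hc' | hc'
    · subst hbc
      exact absurd (add_mem hb' hc') hdiff
    · exact Or.inl (by simpa [hbc] using hc')
  · exact Or.inr (by simpa [hbc] using hb')

lemma mem_of_isAtomIn_closure (hred : ∀ x ∈ closure S, -x ∈ closure S → x = 0)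
    (hS : (0 : G) ∉ S) {a : G} (ha : IsAtomIn (closure S : Set G) a) : a ∈ S := by
  obtain ⟨haM, hneg, hsplit⟩ := ha
  obtain ⟨l, hlS, rfl⟩ := exists_multiset_of_mem_closure haM
  obtain ⟨x, hx⟩ : ∃ x, x ∈ l := by
    refine Multiset.exists_mem_of_ne_zero fun hl => hneg ?_
    simp [hl]
  obtain ⟨t, rfl⟩ := Multiset.exists_cons_of_mem hx
  have hxS : x ∈ S := hlS x hx
  have ht : t.sum ∈ closure S :=
    multiset_sum_mem _ _ fun y hy => subset_closure (hlS y (Multiset.mem_cons_of_mem hy))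
  rw [Multiset.sum_cons] at hsplit ⊢
  rcases hsplit x (subset_closure hxS) _ ht rfl with h | h
  · exact absurd (hred x (subset_closure hxS) h ▸ hxS) hS
  · rwa [hred _ ht h, add_zero]

lemma isAtomicSet_closure (hS : ∀ x ∈ S, IsAtomIn (closure S : Set G) x) :
    IsAtomicSet (closure S : Set G) := fun _ ha _ =>
  let ⟨l, hl, hsum⟩ := exists_multiset_of_mem_closure ha
  ⟨l, fun x hx => hS x (hl x hx), hsum⟩

end Atoms

section Positive

variable {G : Type*} [AddCommGroup G] [PartialOrder G] [IsOrderedAddMonoid G] {S : Set G}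

lemma nonneg_of_mem_closure (hS : ∀ x ∈ S, 0 < x) {x : G} (hx : x ∈ closure S) : 0 ≤ x := by
  induction hx using closure_induction with
  | mem x hx => exact (hS x hx).le
  | zero => exact le_rfl
  | add x y _ _ hx hy => exact add_nonneg hx hy

lemma eq_zero_of_mem_closure_of_neg_mem (hS : ∀ x ∈ S, 0 < x) {x : G} (hx : x ∈ closure S)
    (hx' : -x ∈ closure S) : x = 0 :=
  le_antisymm (neg_nonneg.mp (nonneg_of_mem_closure hS hx')) (nonneg_of_mem_closure hS hx)

lemma neg_notMem_closure (hS : ∀ x ∈ S, 0 < x) {x : G} (hx : x ∈ S) : -x ∉ closure S :=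
  fun h => (hS x hx).ne' (eq_zero_of_mem_closure_of_neg_mem hS (subset_closure hx) h)

end Positive

section Ideals

variable {G : Type*} [AddCommGroup G]

lemma setIdeal_subset_setIdeal {M : AddSubmonoid G} {b c : G} (h : b - c ∈ M) :
    setIdeal (M : Set G) b ⊆ setIdeal (M : Set G) c := by
  rintro _ ⟨m, hm, rfl⟩
  exact ⟨b - c + m, add_mem h hm, by abel⟩

lemma not_setIdeal_subset_setIdeal [PartialOrder G] [IsOrderedAddMonoid G] {M : AddSubmonoid G}
    (hM : ∀ x ∈ M, 0 ≤ x) {b c : G} (hcb : c < b) :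
    ¬ setIdeal (M : Set G) c ⊆ setIdeal (M : Set G) b := fun h => by
  obtain ⟨m, hm, hc⟩ := h ⟨0, zero_mem M, (add_zero c).symm⟩
  exact hcb.not_ge (hc ▸ le_add_of_nonneg_right (hM m hm))

lemma not_satisfiesACCPSet_of_ssubset {S : Set G} (b : ℕ → G) (hb : ∀ n, b n ∈ S)
    (hchain : ∀ n, setIdeal S (b n) ⊂ setIdeal S (b (n + 1))) :
    ¬ SatisfiesACCPSet S := fun h =>
  let ⟨N, hN⟩ := h b hb fun n => (hchain n).subset
  (hchain N).ne (hN (N + 1) N.le_succ).symm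

end Ideals

lemma Rat.not_dvd_den_of_mem_closure {p : ℕ} (hp : p.Prime) {T : Set ℚ}
    (hT : ∀ x ∈ T, ¬ p ∣ x.den) {q : ℚ} (hq : q ∈ AddSubmonoid.closure T) :
    ¬ p ∣ q.den := by
  induction hq using closure_induction with
  | mem x hx => exact hT x hx
  | zero => simpa using hp.ne_one
  | add x y _ _ hx hy => exact fun h => (hp.dvd_mul.mp (h.trans (Rat.add_den_dvd x y))).elim hx hy

lemma oddPrime_prime (n : ℕ) : (oddPrime n).Prime := Nat.prime_nth_prime n

lemma oddPrime_injective : Function.Injective oddPrime :=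
  Nat.nth_injective Nat.infinite_setOfPred_prime

lemma oddPrime_ne_two {n : ℕ} (hn : 1 ≤ n) : oddPrime n ≠ 2 := fun h => by
  have := oddPrime_injective (h.trans Nat.nth_prime_zero_eq_two.symm)
  omega

noncomputable def gramsAtom (n : ℕ) : ℚ := 1 / (2 ^ (n - 1) * (oddPrime n : ℚ))

lemma gramsAtom_pos (n : ℕ) : 0 < gramsAtom n := by
  have := (oddPrime_prime n).pos
  unfold gramsAtom
  positivity

lemma gramsAtom_den (n : ℕ) : (gramsAtom n).den = 2 ^ (n - 1) * oddPrime n := by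
  have h : gramsAtom n = ((2 ^ (n - 1) * oddPrime n : ℕ) : ℚ)⁻¹ := by simp [gramsAtom]
  rw [h, Rat.inv_natCast_den_of_pos]
  exact Nat.mul_pos (Nat.two_pow_pos _) (oddPrime_prime n).pos

lemma oddPrime_dvd_den_gramsAtom_iff {k n : ℕ} (hn : 1 ≤ n) :
    oddPrime n ∣ (gramsAtom k).den ↔ k = n := by
  have hp := oddPrime_prime n
  rw [gramsAtom_den, hp.dvd_mul]
  constructor
  · rintro (h | h)
    · exact absurd ((Nat.prime_dvd_prime_iff_eq hp Nat.prime_two).mp (hp.dvd_of_dvd_pow h))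
        (oddPrime_ne_two hn)
    · exact oddPrime_injective ((Nat.prime_dvd_prime_iff_eq hp (oddPrime_prime k)).mp h).symm
  · rintro rfl
    exact Or.inr dvd_rfl

lemma gramsAtom_notMem_closure_diff {n : ℕ} (hn : 1 ≤ n) :
    gramsAtom n ∉ AddSubmonoid.closure (gramsGen \ {gramsAtom n}) := by
  refine fun h => Rat.not_dvd_den_of_mem_closure (oddPrime_prime n) ?_ h
    ((oddPrime_dvd_den_gramsAtom_iff hn).mpr rfl)
  rintro _ ⟨⟨k, -, rfl⟩, hk⟩ hdvd
  exact hk (congrArg gramsAtom ((oddPrime_dvd_den_gramsAtom_iff hn).mp hdvd))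

lemma gramsGen_pos : ∀ x ∈ gramsGen, 0 < x := by
  rintro _ ⟨n, -, rfl⟩
  exact gramsAtom_pos n

lemma isAtomIn_gramsM_iff {a : ℚ} : IsAtomIn gramsM a ↔ a ∈ gramsGen := by
  refine ⟨mem_of_isAtomIn_closure (fun _ => eq_zero_of_mem_closure_of_neg_mem gramsGen_pos)
    fun h => (gramsGen_pos 0 h).false, ?_⟩
  rintro ⟨n, hn, rfl⟩
  exact isAtomIn_closure_of_notMem_closure_diff ⟨n, hn, rfl⟩
    (neg_notMem_closure gramsGen_pos ⟨n, hn, rfl⟩) (gramsAtom_notMem_closure_diff hn)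

lemma gramsAtom_mem_gramsM {n : ℕ} (hn : 1 ≤ n) : gramsAtom n ∈ gramsM :=
  AddSubmonoid.subset_closure ⟨n, hn, rfl⟩

lemma one_div_two_pow_mem_gramsM (n : ℕ) : (1 : ℚ) / 2 ^ n ∈ gramsM := by
  have h : (1 : ℚ) / 2 ^ n = oddPrime (n + 1) • gramsAtom (n + 1) := by
    have := (oddPrime_prime (n + 1)).pos
    simp only [gramsAtom, nsmul_eq_mul, Nat.add_sub_cancel]
    field_simp
  rw [h]
  exact nsmul_mem (gramsAtom_mem_gramsM n.succ_pos) _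

lemma setIdeal_gramsM_ssubset (n : ℕ) :
    setIdeal gramsM ((1 : ℚ) / 2 ^ n) ⊂ setIdeal gramsM ((1 : ℚ) / 2 ^ (n + 1)) := by
  have hsub : (1 : ℚ) / 2 ^ n - 1 / 2 ^ (n + 1) = 1 / 2 ^ (n + 1) := by ring
  refine ⟨setIdeal_subset_setIdeal (by rw [hsub]; exact one_div_two_pow_mem_gramsM (n + 1)),
    not_setIdeal_subset_setIdeal (fun _ => nonneg_of_mem_closure gramsGen_pos) ?_⟩
  gcongr <;> norm_num

/-- Grams' monoid is atomic, its atoms are exactly the generators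
`1/(2^(n-1) p_n)`, and it does not satisfy the ACCP: `(1/2^n + M)` is an ascending chain
of principal ideals that does not stabilize. -/
theorem grams_monoid_atomic_not_ACCP :
    IsAtomicSet gramsM ∧
    {a : ℚ | IsAtomIn gramsM a} = gramsGen ∧
    (∀ n : ℕ, 1 ≤ n → (1 : ℚ) / 2 ^ n ∈ gramsM ∧
      setIdeal gramsM ((1 : ℚ) / 2 ^ n) ⊂ setIdeal gramsM ((1 : ℚ) / 2 ^ (n + 1))) ∧
    ¬ SatisfiesACCPSet gramsM :=
  ⟨isAtomicSet_closure fun _ hx => isAtomIn_gramsM_iff.mpr hx,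
    Set.ext fun _ => isAtomIn_gramsM_iff,
    fun n _ => ⟨one_div_two_pow_mem_gramsM n, setIdeal_gramsM_ssubset n⟩,
    not_satisfiesACCPSet_of_ssubset _ one_div_two_pow_mem_gramsM setIdeal_gramsM_ssubset⟩
end

section
/- For each integer d ≥ 2, there exists a reduced submonoid M of the additive group ℤ^d such that the subgroup of ℤ^d generated by M has rank d (equivalently, M contains d ℤ-linearly independent elements), M is atomic, and M does not satisfy the ACCP. -/
/-!
Let `ω = √3 - 1 ∈ ℤ[√3]` and let `powClosure` be the additive monoid generated by the powers of
`ω`. Under the real embedding `0 < ω < 1`, so `powClosure` is reduced, and since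
`2 = 2ω + ω²` gives `2ω^k = 2ω^(k+1) + ω^(k+2)`, the principal ideals `2ω^k + powClosure` form an
ascending chain that never stabilises.
Each `ω^k` is an atom: a sum of powers of `ω` equal to `ω^k` only uses exponents `≥ k` (real
embedding); after dividing by `ω^k`, the ring map `ℤ[√3] → ZMod 2`, `√3 ↦ 1`, which kills `ω`,
forces a term `ω^0 = 1`, and then the real embedding leaves room for nothing else.

For `ℤ^(n+2)`, put `ℤ[√3] ≅ ℤ²` in the first two coordinates and add the remaining unit vectors as
further generators. Atoms are detected in the larger monoid `envelope` of vectors whose first two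
coordinates lie in `powClosure` and whose other coordinates are nonnegative.
-/

open Set Zsqrtd AddSubmonoid

def IsReducedSet {G : Type*} [AddCommGroup G] (S : Set G) : Prop :=
  ∀ a ∈ S, -a ∈ S → a = 0

section General

variable {G ι : Type*}

theorem AddSubmonoid.exists_multiset_of_mem_closure_range [AddCommMonoid G] {f : ι → G} {x : G}
    (hx : x ∈ closure (range f)) : ∃ s : Multiset ι, (s.map f).sum = x := by
  induction hx using closure_induction with
  | mem x hx => obtain ⟨i, rfl⟩ := hx; exact ⟨{i}, by simp⟩
  | zero => exact ⟨0, by simp⟩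
  | add x y _ _ hx hy =>
    obtain ⟨s, rfl⟩ := hx
    obtain ⟨t, rfl⟩ := hy
    exact ⟨s + t, by simp⟩

theorem map_multiset_sum_map_nonneg [AddCommMonoid G] (φ : G →+ ℝ) {f : ι → G}
    (hf : ∀ i, 0 ≤ φ (f i)) (s : Multiset ι) : 0 ≤ φ (s.map f).sum := by
  rw [map_multiset_sum, Multiset.map_map]
  exact Multiset.sum_nonneg fun _ hx => by
    obtain ⟨i, -, rfl⟩ := Multiset.mem_map.1 hx
    exact hf i

theorem eq_zero_of_map_multiset_sum_map_nonpos [AddCommMonoid G] (φ : G →+ ℝ) {f : ι → G}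
    (hf : ∀ i, 0 < φ (f i)) {s : Multiset ι} (hs : φ (s.map f).sum ≤ 0) : s = 0 := by
  by_contra h
  rw [map_multiset_sum, Multiset.map_map] at hs
  have := Multiset.sum_lt_sum_of_nonempty h (f := 0) (g := φ ∘ f) fun i _ => hf i
  simp only [Pi.zero_apply, Multiset.map_const', Multiset.sum_replicate, smul_zero] at this
  linarith

theorem map_nonneg_of_mem_closure_range [AddCommMonoid G] (φ : G →+ ℝ) {f : ι → G}
    (hf : ∀ i, 0 ≤ φ (f i)) {x : G} (hx : x ∈ closure (range f)) : 0 ≤ φ x := by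
  obtain ⟨s, rfl⟩ := exists_multiset_of_mem_closure_range hx
  exact map_multiset_sum_map_nonneg φ hf s

theorem isReducedSet_closure_range [AddCommGroup G] (φ : G →+ ℝ) {f : ι → G}
    (hf : ∀ i, 0 < φ (f i)) : IsReducedSet (closure (range f) : Set G) := by
  intro a ha hna
  obtain ⟨s, rfl⟩ := exists_multiset_of_mem_closure_range ha
  obtain ⟨t, ht⟩ := exists_multiset_of_mem_closure_range hna
  have hst : ((s + t).map f).sum = 0 := by simp [ht]
  have hs : s = 0 := (add_eq_zero.1
    (eq_zero_of_map_multiset_sum_map_nonpos φ hf (s := s + t) (by rw [hst, map_zero]))).1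
  simp [hs]

variable [AddCommGroup G]

theorem isAtomIn_of_le {S P : AddSubmonoid G} (hSP : S ≤ P) (hP : IsReducedSet (P : Set G))
    {x : G} (hxS : x ∈ S) (hx0 : x ≠ 0)
    (hx : ∀ b ∈ P, ∀ c ∈ P, b + c = x → b = 0 ∨ c = 0) : IsAtomIn (S : Set G) x := by
  refine ⟨hxS, fun h => hx0 (hP x (hSP hxS) (hSP h)), fun b hb c hc h => ?_⟩
  rcases hx b (hSP hb) c (hSP hc) h.symm with rfl | rfl <;> simp [S.zero_mem]

theorem isAtomicSet_closure_s8 {A : Set G} (hA : ∀ a ∈ A, IsAtomIn (closure A : Set G) a) :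
    IsAtomicSet (closure A : Set G) := fun a ha _ => by
  obtain ⟨l, hl, rfl⟩ := exists_multiset_of_mem_closure ha
  exact ⟨l, fun x hx => hA x (hl x hx), rfl⟩

theorem setIdeal_subset_of_sub_mem {S : AddSubmonoid G} {b c : G} (h : b - c ∈ S) :
    setIdeal (S : Set G) b ⊆ setIdeal S c := by
  rintro _ ⟨m, hm, rfl⟩
  exact ⟨b - c + m, add_mem h hm, by abel⟩

theorem not_satisfiesACCPSet_of_map_lt (S : AddSubmonoid G) (φ : G →+ ℝ)
    (hφ : ∀ x ∈ S, 0 ≤ φ x) {b : ℕ → G} (hb : ∀ n, b n ∈ S) (hstep : ∀ n, b n - b (n + 1) ∈ S)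
    (hlt : ∀ n, φ (b (n + 1)) < φ (b n)) : ¬ SatisfiesACCPSet (S : Set G) := by
  intro hS
  obtain ⟨N, hN⟩ := hS b hb fun n => setIdeal_subset_of_sub_mem (hstep n)
  have hmem : b (N + 1) ∈ setIdeal (S : Set G) (b N) :=
    hN (N + 1) N.le_succ ▸ ⟨0, S.zero_mem, (add_zero _).symm⟩
  obtain ⟨m, hm, hbm⟩ := hmem
  have := hlt N
  rw [hbm, map_add] at this
  linarith [hφ m hm]

end General

def sqrt3SubOne : ℤ√3 := ⟨-1, 1⟩

local notation "ω" => sqrt3SubOne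

theorem two_eq_two_mul_sqrt3SubOne_add_sq : (2 : ℤ√3) = 2 * ω + ω ^ 2 := by decide

noncomputable def sqrt3ToReal : ℤ√3 →+* ℝ := toReal (by norm_num)

theorem sqrt3ToReal_injective : Function.Injective sqrt3ToReal :=
  toReal_injective _ fun n h => by
    have : n ≤ 2 := by nlinarith
    have : -2 ≤ n := by nlinarith
    interval_cases n <;> omega

instance : IsDomain (ℤ√3) := sqrt3ToReal_injective.isDomain

theorem sqrt3ToReal_sqrt3SubOne : sqrt3ToReal ω = √3 - 1 := by
  simp only [sqrt3ToReal, sqrt3SubOne, toReal_apply]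
  push_cast
  ring

theorem sqrt3ToReal_sqrt3SubOne_pos : 0 < sqrt3ToReal ω := by
  rw [sqrt3ToReal_sqrt3SubOne, sub_pos, Real.lt_sqrt zero_le_one]
  norm_num

theorem sqrt3ToReal_sqrt3SubOne_lt_one : sqrt3ToReal ω < 1 := by
  rw [sqrt3ToReal_sqrt3SubOne, sub_lt_iff_lt_add, one_add_one_eq_two, Real.sqrt_lt' two_pos]
  norm_num

theorem sqrt3ToReal_sqrt3SubOne_pow_pos (i : ℕ) : 0 < sqrt3ToReal (ω ^ i) := by
  simpa using pow_pos sqrt3ToReal_sqrt3SubOne_pos i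

theorem sum_sqrt3SubOne_pow_eq_one {s : Multiset ℕ} (h : (s.map (ω ^ ·)).sum = 1) : s = {0} := by
  have h0 : 0 ∈ s := by
    by_contra h0
    let χ : ℤ√3 →+* ZMod 2 := lift ⟨1, by decide⟩
    have hχ : χ (s.map (ω ^ ·)).sum = 0 := by
      rw [map_multiset_sum, Multiset.map_map]
      refine Multiset.sum_eq_zero fun x hx => ?_
      obtain ⟨i, hi, rfl⟩ := Multiset.mem_map.1 hx
      have hχω : χ ω = 0 := by decide
      simp [hχω, zero_pow (ne_of_mem_of_not_mem hi h0)]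
    rw [h, map_one] at hχ
    exact one_ne_zero hχ
  obtain ⟨t, rfl⟩ := Multiset.exists_cons_of_mem h0
  have ht : (t.map (ω ^ ·)).sum = 0 := by simpa using h
  rw [eq_zero_of_map_multiset_sum_map_nonpos (s := t) sqrt3ToReal.toAddMonoidHom
    sqrt3ToReal_sqrt3SubOne_pow_pos (by rw [ht, map_zero])]
  rfl

theorem sum_sqrt3SubOne_pow_eq_pow {s : Multiset ℕ} {k : ℕ} (h : (s.map (ω ^ ·)).sum = ω ^ k) :
    s = {k} := by
  have hk : ∀ i ∈ s, k ≤ i := fun i hi => by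
    obtain ⟨t, rfl⟩ := Multiset.exists_cons_of_mem hi
    have hψ := congrArg sqrt3ToReal h
    have : 0 ≤ sqrt3ToReal (t.map (ω ^ ·)).sum := map_multiset_sum_map_nonneg
      sqrt3ToReal.toAddMonoidHom (fun i => (sqrt3ToReal_sqrt3SubOne_pow_pos i).le) t
    simp only [Multiset.map_cons, Multiset.sum_cons, map_add, map_pow] at hψ
    rw [← pow_le_pow_iff_right_of_lt_one₀ sqrt3ToReal_sqrt3SubOne_pos
      sqrt3ToReal_sqrt3SubOne_lt_one]
    linarith
  obtain ⟨t, rfl⟩ : ∃ t : Multiset ℕ, s = t.map (· + k) := ⟨s.map (· - k), by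
    rw [Multiset.map_map]
    conv_lhs => rw [← Multiset.map_id s]
    exact Multiset.map_congr rfl fun i hi => by simp [Nat.sub_add_cancel (hk i hi)]⟩
  have ht : (t.map (ω ^ ·)).sum = 1 := by
    have hshift : (t.map (ω ^ ·)).sum * ω ^ k = ((t.map (· + k)).map (ω ^ ·)).sum := by
      rw [Multiset.map_map, ← Multiset.sum_map_mul_right]
      simp [pow_add]
    exact (mul_eq_right₀ (pow_ne_zero k (by decide : ω ≠ 0))).1 (hshift.trans h)
  rw [sum_sqrt3SubOne_pow_eq_one ht]
  simp

def powClosure : AddSubmonoid (ℤ√3) := closure (range (ω ^ ·))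

theorem isReducedSet_powClosure : IsReducedSet (powClosure : Set (ℤ√3)) :=
  isReducedSet_closure_range sqrt3ToReal.toAddMonoidHom sqrt3ToReal_sqrt3SubOne_pow_pos

theorem sqrt3ToReal_nonneg_of_mem_powClosure {z : ℤ√3} (hz : z ∈ powClosure) :
    0 ≤ sqrt3ToReal z :=
  map_nonneg_of_mem_closure_range sqrt3ToReal.toAddMonoidHom
    (fun i => (sqrt3ToReal_sqrt3SubOne_pow_pos i).le) hz

theorem eq_zero_or_eq_zero_of_add_eq_sqrt3SubOne_pow {b c : ℤ√3} (hb : b ∈ powClosure)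
    (hc : c ∈ powClosure) {k : ℕ} (h : b + c = ω ^ k) : b = 0 ∨ c = 0 := by
  obtain ⟨s, rfl⟩ := exists_multiset_of_mem_closure_range hb
  obtain ⟨t, rfl⟩ := exists_multiset_of_mem_closure_range hc
  have hcard := congrArg Multiset.card (sum_sqrt3SubOne_pow_eq_pow (s := s + t) (by simpa using h))
  rw [Multiset.card_add, Multiset.card_singleton] at hcard
  obtain hs | ht : Multiset.card s = 0 ∨ Multiset.card t = 0 := by omega
  · simp [Multiset.card_eq_zero.1 hs]
  · simp [Multiset.card_eq_zero.1 ht]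

section Lattice

variable (n : ℕ)

def proj : (Fin (n + 2) → ℤ) →+ ℤ√3 where
  toFun v := ⟨v 0, v 1⟩
  map_zero' := rfl
  map_add' _ _ := rfl

def embed : ℤ√3 →+ (Fin (n + 2) → ℤ) where
  toFun z := Fin.cons z.re (Fin.cons z.im 0)
  map_zero' := by
    ext i
    exact Fin.cases rfl (Fin.cases rfl fun _ => rfl) i
  map_add' z w := by
    ext i
    exact Fin.cases rfl (Fin.cases rfl fun _ => (add_zero 0).symm) i

def tailSum : (Fin (n + 2) → ℤ) →+ ℤ where
  toFun v := ∑ j : Fin n, v j.succ.succ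
  map_zero' := by simp
  map_add' v w := by simp [Finset.sum_add_distrib]

def envelope : AddSubmonoid (Fin (n + 2) → ℤ) where
  carrier := {v | proj n v ∈ powClosure ∧ ∀ j : Fin n, 0 ≤ v j.succ.succ}
  zero_mem' := ⟨by simp [zero_mem], fun _ => le_rfl⟩
  add_mem' ha hb := ⟨by simpa using add_mem ha.1 hb.1, fun j => add_nonneg (ha.2 j) (hb.2 j)⟩

def generators : Set (Fin (n + 2) → ℤ) :=
  range (fun k => embed n (ω ^ k)) ∪ range (fun j : Fin n => Pi.single j.succ.succ 1)

def latticeMonoid : AddSubmonoid (Fin (n + 2) → ℤ) := closure (generators n)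

variable {n}

theorem tailSum_apply (v : Fin (n + 2) → ℤ) : tailSum n v = ∑ j : Fin n, v j.succ.succ := rfl

theorem proj_apply (v : Fin (n + 2) → ℤ) : proj n v = ⟨v 0, v 1⟩ := rfl

theorem mem_envelope {v : Fin (n + 2) → ℤ} :
    v ∈ envelope n ↔ proj n v ∈ powClosure ∧ ∀ j : Fin n, 0 ≤ v j.succ.succ :=
  Iff.rfl

theorem proj_embed (z : ℤ√3) : proj n (embed n z) = z := rfl

theorem tailSum_embed (z : ℤ√3) : tailSum n (embed n z) = 0 := by
  simp [tailSum, embed]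

theorem proj_single_succ_succ (j : Fin n) : proj n (Pi.single j.succ.succ 1) = 0 := by
  ext <;> simp [proj_apply, Fin.succ_succ_ne_one]

theorem tailSum_single_succ_succ (j : Fin n) : tailSum n (Pi.single j.succ.succ 1) = 1 := by
  simp [tailSum, Pi.single_apply]

theorem tailSum_nonneg {v : Fin (n + 2) → ℤ} (hv : v ∈ envelope n) : 0 ≤ tailSum n v :=
  tailSum_apply v ▸ Finset.sum_nonneg fun j _ => (mem_envelope.1 hv).2 j

theorem eq_zero_of_proj_eq_zero_of_tailSum_eq_zero {v : Fin (n + 2) → ℤ} (hv : v ∈ envelope n)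
    (hp : proj n v = 0) (ht : tailSum n v = 0) : v = 0 := by
  rw [tailSum_apply, Finset.sum_eq_zero_iff_of_nonneg fun j _ => (mem_envelope.1 hv).2 j] at ht
  funext i
  exact Fin.cases (congrArg re hp) (Fin.cases (congrArg im hp)
    fun j => ht j (Finset.mem_univ _)) i

theorem isReducedSet_envelope : IsReducedSet (envelope n : Set (Fin (n + 2) → ℤ)) := by
  intro a ha hna
  have hp : proj n a = 0 := isReducedSet_powClosure _ ha.1 (by simpa using hna.1)
  have := tailSum_nonneg hna
  rw [map_neg] at this
  exact eq_zero_of_proj_eq_zero_of_tailSum_eq_zero ha hp (by linarith [tailSum_nonneg ha])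

theorem eq_zero_or_eq_zero_of_add_eq_embed {b c : Fin (n + 2) → ℤ} (hb : b ∈ envelope n)
    (hc : c ∈ envelope n) {k : ℕ} (h : b + c = embed n (ω ^ k)) : b = 0 ∨ c = 0 := by
  have hp : proj n b + proj n c = ω ^ k := by rw [← map_add, h, proj_embed]
  have ht : tailSum n b + tailSum n c = 0 := by rw [← map_add, h, tailSum_embed]
  have := tailSum_nonneg hb
  have := tailSum_nonneg hc
  exact (eq_zero_or_eq_zero_of_add_eq_sqrt3SubOne_pow hb.1 hc.1 hp).imp
    (fun hpb => eq_zero_of_proj_eq_zero_of_tailSum_eq_zero hb hpb (by linarith))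
    (fun hpc => eq_zero_of_proj_eq_zero_of_tailSum_eq_zero hc hpc (by linarith))

theorem eq_zero_or_eq_zero_of_add_eq_single {b c : Fin (n + 2) → ℤ} (hb : b ∈ envelope n)
    (hc : c ∈ envelope n) {j : Fin n} (h : b + c = Pi.single j.succ.succ 1) : b = 0 ∨ c = 0 := by
  have hp : proj n b + proj n c = 0 := by rw [← map_add, h, proj_single_succ_succ]
  have hpb : proj n b = 0 :=
    isReducedSet_powClosure _ hb.1 (by rw [neg_eq_of_add_eq_zero_right hp]; exact hc.1)
  have hpc : proj n c = 0 := by rwa [hpb, zero_add] at hp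
  have ht : tailSum n b + tailSum n c = 1 := by rw [← map_add, h, tailSum_single_succ_succ]
  have := tailSum_nonneg hb
  have := tailSum_nonneg hc
  obtain hb0 | hc0 : tailSum n b = 0 ∨ tailSum n c = 0 := by omega
  exacts [.inl (eq_zero_of_proj_eq_zero_of_tailSum_eq_zero hb hpb hb0),
    .inr (eq_zero_of_proj_eq_zero_of_tailSum_eq_zero hc hpc hc0)]

theorem latticeMonoid_le_envelope : latticeMonoid n ≤ envelope n := by
  refine closure_le.2 ?_
  rintro _ (⟨k, rfl⟩ | ⟨j, rfl⟩)
  · exact mem_envelope.2 ⟨subset_closure ⟨k, rfl⟩, fun j => by simp [embed]⟩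
  · exact mem_envelope.2 ⟨by rw [proj_single_succ_succ]; exact zero_mem _,
      fun i => (Pi.single_nonneg.2 zero_le_one : (0 : Fin (n + 2) → ℤ) ≤ _) i.succ.succ⟩

theorem isAtomIn_of_mem_generators {x : Fin (n + 2) → ℤ} (hx : x ∈ generators n) :
    IsAtomIn (latticeMonoid n : Set (Fin (n + 2) → ℤ)) x := by
  refine isAtomIn_of_le latticeMonoid_le_envelope isReducedSet_envelope (subset_closure hx) ?_ ?_
  all_goals rcases hx with ⟨k, rfl⟩ | ⟨j, rfl⟩
  · exact fun h => pow_ne_zero k (by decide : ω ≠ 0)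
      (by simpa [proj_embed] using congrArg (proj n) h)
  · simp
  · exact fun b hb c hc => eq_zero_or_eq_zero_of_add_eq_embed hb hc
  · exact fun b hb c hc => eq_zero_or_eq_zero_of_add_eq_single hb hc

theorem single_mem_latticeMonoid (i : Fin (n + 2)) : Pi.single i 1 ∈ latticeMonoid n := by
  have hpow (k : ℕ) : embed n (ω ^ k) ∈ latticeMonoid n := subset_closure (.inl ⟨k, rfl⟩)
  have h0 : embed n (ω ^ 0) = Pi.single 0 1 := by
    ext i
    exact Fin.cases (by simp [embed]) (Fin.cases (by simp [embed]) fun j => by simp [embed]) i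
  have h1 : embed n (ω ^ 0 + ω ^ 1) = Pi.single 1 1 := by
    ext i
    exact Fin.cases (by simp [embed, sqrt3SubOne]) (Fin.cases (by simp [embed, sqrt3SubOne])
      fun j => by simp [embed, Fin.succ_succ_ne_one]) i
  refine Fin.cases ?_ (Fin.cases ?_ fun j => subset_closure (.inr ⟨j, rfl⟩)) i
  · exact h0 ▸ hpow 0
  · exact h1 ▸ (map_add (embed n) _ _).symm ▸ add_mem (hpow 0) (hpow 1)

theorem not_satisfiesACCPSet_latticeMonoid :
    ¬ SatisfiesACCPSet (latticeMonoid n : Set (Fin (n + 2) → ℤ)) := by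
  have hpow (k : ℕ) : embed n (ω ^ k) ∈ latticeMonoid n := subset_closure (.inl ⟨k, rfl⟩)
  refine not_satisfiesACCPSet_of_map_lt _ (sqrt3ToReal.toAddMonoidHom.comp (proj n))
    (fun x hx => sqrt3ToReal_nonneg_of_mem_powClosure (latticeMonoid_le_envelope hx).1)
    (b := fun k => embed n (2 * ω ^ k)) (fun k => ?_) (fun k => ?_) (fun k => ?_)
  · rw [two_mul, map_add]
    exact add_mem (hpow k) (hpow k)
  · rw [← map_sub, show 2 * ω ^ k - 2 * ω ^ (k + 1) = ω ^ (k + 2) by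
      linear_combination ω ^ k * two_eq_two_mul_sqrt3SubOne_add_sq]
    exact hpow _
  · simp only [AddMonoidHom.comp_apply, proj_embed, RingHom.toAddMonoidHom_eq_coe,
      AddMonoidHom.coe_coe, map_mul, map_pow, map_ofNat]
    exact mul_lt_mul_of_pos_left (pow_lt_pow_right_of_lt_one₀ sqrt3ToReal_sqrt3SubOne_pos
      sqrt3ToReal_sqrt3SubOne_lt_one k.lt_succ_self) two_pos

end Lattice

/-- For each `d ≥ 2` there is a reduced submonoid `M` of `ℤ^d` of full
rank `d` (i.e. `M` contains `d` linearly independent elements over `ℤ`) that is atomic but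
does not satisfy the ACCP. -/
theorem exists_full_rank_atomic_lattice_monoid_not_ACCP (d : ℕ) (hd : 2 ≤ d) :
    ∃ M : Set (Fin d → ℤ), IsSubmonoidSet M ∧
      (∀ a ∈ M, -a ∈ M → a = 0) ∧
      (∃ f : Fin d → (Fin d → ℤ), (∀ i, f i ∈ M) ∧ LinearIndependent ℤ f) ∧
      IsAtomicSet M ∧ ¬ SatisfiesACCPSet M := by
  obtain ⟨n, rfl⟩ := Nat.exists_eq_add_of_le' hd
  refine ⟨latticeMonoid n, ⟨zero_mem _, fun _ ha _ hb => add_mem ha hb⟩,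
    fun a ha hna => isReducedSet_envelope a (latticeMonoid_le_envelope ha)
      (latticeMonoid_le_envelope hna),
    ⟨fun i => Pi.single i 1, single_mem_latticeMonoid, Pi.linearIndependent_single_one _ _⟩,
    isAtomicSet_closure_s8 fun _ => isAtomIn_of_mem_generators, not_satisfiesACCPSet_latticeMonoid⟩
end

section
/- For each integer d ≥ 2, there exists a submonoid M of the additive group ℤ^d such that the subgroup of ℤ^d generated by M has rank d, M is atomic, but M is not hereditarily atomic, i.e. M has a submonoid that is not atomic. -/
/-- For each `d ≥ 2` there is a submonoid `M` of `ℤ^d` of full rank `d`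
that is atomic but not hereditarily atomic: some submonoid of `M` is not atomic. -/
theorem exists_full_rank_atomic_lattice_monoid_not_hereditarily_atomic (d : ℕ) (hd : 2 ≤ d) :
    ∃ M : Set (Fin d → ℤ), IsSubmonoidSet M ∧
      (∃ f : Fin d → (Fin d → ℤ), (∀ i, f i ∈ M) ∧ LinearIndependent ℤ f) ∧
      IsAtomicSet M ∧
      ∃ N : Set (Fin d → ℤ), N ⊆ M ∧ IsSubmonoidSet N ∧ ¬ IsAtomicSet N := by
  set i0 : Fin d := ⟨0, by omega⟩ with hi0
  set i1 : Fin d := ⟨1, by omega⟩ with hi1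
  have hne : i0 ≠ i1 := by simp [hi0, hi1, Fin.ext_iff]
  set e0 : Fin d → ℤ := Pi.single i0 1 with he0
  set e1 : Fin d → ℤ := Pi.single i1 1 with he1
  have he0i0 : e0 i0 = 1 := Pi.single_eq_same _ _
  have he1i0 : e1 i0 = 0 := Pi.single_eq_of_ne hne _
  have he1i1 : e1 i1 = 1 := Pi.single_eq_same _ _
  -- helper: evaluating a multiset sum
  have sum_apply : ∀ (l : Multiset (Fin d → ℤ)) (j : Fin d),
      l.sum j = (l.map (fun x => x j)).sum := by
    intro l j
    induction l using Multiset.induction with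
    | empty => simp
    | cons a s ih => simp [ih]
  refine ⟨{v | 0 ≤ v i0}, ⟨by simp, ?_⟩, ?_, ?_, ?_⟩
  · -- closure of M
    intro a ha b hb
    simp only [Set.mem_setOf_eq, Pi.add_apply] at *
    omega
  · -- full rank
    refine ⟨fun i => Pi.single i 1, ?_, ?_⟩
    · intro i
      simp only [Set.mem_setOf_eq, Pi.single_apply]
      split <;> omega
    · rw [Fintype.linearIndependent_iff]
      intro g hg i
      have := congrFun hg i
      simpa [Finset.sum_apply, Pi.single_apply] using this
  · -- M is atomic
    have atomM : ∀ x : Fin d → ℤ, x i0 = 1 → IsAtomIn {v : Fin d → ℤ | 0 ≤ v i0} x := by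
      intro x hx
      refine ⟨by simp [Set.mem_setOf_eq, hx], ?_, ?_⟩
      · simp [Set.mem_setOf_eq, hx]
      · intro b hb c hc heq
        simp only [Set.mem_setOf_eq] at hb hc
        have h1 : x i0 = b i0 + c i0 := by rw [heq]; simp
        have : b i0 = 0 ∨ c i0 = 0 := by omega
        rcases this with h | h
        · left; simp [Set.mem_setOf_eq, h]
        · right; simp [Set.mem_setOf_eq, h]
    intro v hv hnv
    simp only [Set.mem_setOf_eq] at hv hnv
    have h1 : 1 ≤ v i0 := by
      by_contra h
      exact hnv (by simp only [Pi.neg_apply]; omega)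
    set m : ℕ := (v i0 - 1).toNat with hmdef
    have hm : (m : ℤ) = v i0 - 1 := Int.toNat_of_nonneg (by omega)
    set w : Fin d → ℤ := v - (m : ℤ) • e0 with hwdef
    have hw : w i0 = 1 := by
      simp only [hwdef, Pi.sub_apply, Pi.smul_apply, he0i0, smul_eq_mul, mul_one]
      omega
    refine ⟨Multiset.replicate m e0 + {w}, ?_, ?_⟩
    · intro x hx
      rcases Multiset.mem_add.mp hx with hx | hx
      · rw [Multiset.eq_of_mem_replicate hx]; exact atomM e0 he0i0
      · rw [Multiset.mem_singleton.mp hx]; exact atomM w hw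
    · rw [Multiset.sum_add, Multiset.sum_replicate, Multiset.sum_singleton,
        ← natCast_zsmul, hwdef]
      abel
  · -- the bad submonoid N
    refine ⟨{v | 1 ≤ v i0 ∨ ∃ k : ℕ, v = (k : ℤ) • e1}, ?_, ⟨?_, ?_⟩, ?_⟩
    · -- N ⊆ M
      intro v hv
      rcases hv with hv | ⟨k, rfl⟩
      · show (0:ℤ) ≤ v i0; omega
      · show (0:ℤ) ≤ ((k : ℤ) • e1) i0
        simp [he1i0]
    · -- 0 ∈ N
      exact Or.inr ⟨0, by simp⟩
    · -- closure of N
      intro a ha b hb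
      have hb0 : (0:ℤ) ≤ b i0 := by
        rcases hb with hb | ⟨k, rfl⟩
        · omega
        · simp [he1i0]
      rcases ha with ha | ⟨k, rfl⟩
      · exact Or.inl (by simp only [Set.mem_setOf_eq, Pi.add_apply] at *; omega)
      · rcases hb with hb | ⟨k', rfl⟩
        · refine Or.inl ?_
          show 1 ≤ ((k : ℤ) • e1 + b) i0
          simp only [Pi.add_apply, Pi.smul_apply, he1i0, smul_eq_mul, mul_zero]
          omega
        · exact Or.inr ⟨k + k', by push_cast; rw [add_smul]⟩
    · -- N is not atomic
      intro hAt
      have he0N : e0 ∈ {v : Fin d → ℤ | 1 ≤ v i0 ∨ ∃ k : ℕ, v = (k : ℤ) • e1} :=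
        Or.inl (by rw [he0i0])
      have hne0N : -e0 ∉ {v : Fin d → ℤ | 1 ≤ v i0 ∨ ∃ k : ℕ, v = (k : ℤ) • e1} := by
        rintro (h | ⟨k, hk⟩)
        · simp only [Pi.neg_apply, he0i0] at h; omega
        · have := congrFun hk i0
          simp [he0i0, he1i0] at this
      obtain ⟨l, hl, hsum⟩ := hAt e0 he0N hne0N
      -- every atom of N has first coordinate 0
      have hz : ∀ x, IsAtomIn {v : Fin d → ℤ | 1 ≤ v i0 ∨ ∃ k : ℕ, v = (k : ℤ) • e1} x →
          x i0 = 0 := by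
        rintro x ⟨hxN, hxinv, hxa⟩
        rcases hxN with hx1 | ⟨k, rfl⟩
        · exfalso
          have he1N : e1 ∈ {v : Fin d → ℤ | 1 ≤ v i0 ∨ ∃ k : ℕ, v = (k : ℤ) • e1} :=
            Or.inr ⟨1, by simp⟩
          have hx' : x - e1 ∈ {v : Fin d → ℤ | 1 ≤ v i0 ∨ ∃ k : ℕ, v = (k : ℤ) • e1} := by
            refine Or.inl ?_
            show 1 ≤ (x - e1) i0
            simp only [Pi.sub_apply, he1i0]
            omega
          rcases hxa e1 he1N (x - e1) hx' (by abel) with h | h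
          · rcases h with h | ⟨k, hk⟩
            · simp only [Set.mem_setOf_eq, Pi.neg_apply, he1i0] at h; omega
            · have := congrFun hk i1
              simp only [Pi.neg_apply, he1i1, Pi.smul_apply, smul_eq_mul, mul_one] at this
              omega
          · rcases h with h | ⟨k, hk⟩
            · simp only [Set.mem_setOf_eq, Pi.neg_apply, Pi.sub_apply, he1i0] at h
              omega
            · have := congrFun hk i0
              simp only [Pi.neg_apply, Pi.sub_apply, he1i0, Pi.smul_apply,
                smul_eq_mul, mul_zero] at this
              omega
        · simp [he1i0]
      have h1 : e0 i0 = (l.map (fun x => x i0)).sum := by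
        rw [← hsum]; exact sum_apply l i0
      have h0 : (l.map (fun x => x i0)).sum = 0 := by
        apply Multiset.sum_eq_zero
        intro y hy
        obtain ⟨x, hxl, rfl⟩ := Multiset.mem_map.mp hy
        exact hz x (hl x hxl)
      rw [he0i0, h0] at h1
      exact one_ne_zero h1
end

section
/- Let F be a field in which every irreducible polynomial in F[x] has degree at most 2 (as holds for every real closed field), and let G be an additive subgroup of ℚ that is not cyclic. Then the group algebra F[G] is an antimatter domain: F[G] is an integral domain with no irreducible elements. -/
/-- A commutative ring (intended: an integral domain) is atomic if every nonzero nonunit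
is a finite product of irreducible elements. -/
def AtomicDomain (A : Type*) [CommRing A] : Prop :=
  ∀ a : A, a ≠ 0 → ¬ IsUnit a → ∃ l : Multiset A, (∀ x ∈ l, Irreducible x) ∧ l.prod = a

/-- A commutative ring satisfies the ACCP if every ascending chain of principal ideals
stabilizes. -/
def RingACCP (A : Type*) [CommRing A] : Prop :=
  ∀ f : ℕ → A, (∀ n, Ideal.span {f n} ≤ Ideal.span {f (n + 1)}) →
    ∃ N, ∀ n, N ≤ n → Ideal.span {f n} = Ideal.span {f N}

/-!
Since `G` is a linearly ordered group, the units of `F[G]` are the monomials, so it suffices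
to factor every `a` with at least two monomials into two non-monomials. Finitely generated
subgroups of `ℚ` are cyclic, so the support of `a` lies in `ℤ r` for some `r ∈ G`; as `G` is not
cyclic, `r` can be divided twice inside `G`, and we may assume that the support lies in `ℤ M r`
with `M ≥ 3`. After a shift by a monomial, `a = p(x^r)` with `p(0) ≠ 0` and `deg p ≥ 3`. Since
irreducible polynomials over `F` have degree at most `2`, `p = q w` with `deg q, deg w > 0`, and
`q(x^r)`, `w(x^r)` have at least two monomials each.
-/

open AddMonoidAlgebra AddSubgroup Polynomial

theorem AddSubgroup.isAddCyclic_closure_finset (G : AddSubgroup ℚ) (S : Finset G) :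
    IsAddCyclic (closure (S : Set G)) := by
  set D : ℕ := ∏ s ∈ S, (s : ℚ).den
  have hD : D ≠ 0 := Finset.prod_ne_zero_iff.2 fun s _ => (s : ℚ).den_nz
  have hS : ∀ s ∈ S, (s : ℚ) ∈ zmultiples (D⁻¹ : ℚ) := by
    intro s hs
    obtain ⟨k, hk⟩ : (s : ℚ).den ∣ D := Finset.dvd_prod_of_mem (fun s : G => (s : ℚ).den) hs
    have hk0 : (k : ℚ) ≠ 0 := Nat.cast_ne_zero.2 (right_ne_zero_of_mul (hk ▸ hD))
    refine mem_zmultiples_iff.2 ⟨(s : ℚ).num * k, ?_⟩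
    rw [zsmul_eq_mul, hk]
    push_cast
    field_simp
    rw [mul_comm, Rat.mul_den_eq_num]
  have hle : ∀ x ∈ closure (S : Set G), (x : ℚ) ∈ zmultiples (D⁻¹ : ℚ) := by
    intro x hx
    induction hx using closure_induction with
    | mem x hx => exact hS x hx
    | zero => exact zero_mem _
    | add x y _ _ hx hy => exact add_mem hx hy
    | neg x _ hx => exact neg_mem hx
  exact isAddCyclic_of_injective
    ((G.subtype.comp (closure (S : Set G)).subtype).codRestrict _ fun x => hle x x.2)
    fun x y h => Subtype.ext <| Subtype.ext (congrArg Subtype.val h :)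

section LinearOrderedAddCommGroup

variable {A : Type*} [AddCommGroup A] [LinearOrder A] [IsOrderedAddMonoid A]

theorem exists_nsmul_eq_of_mem_zmultiples {g t : A} (hg : 0 < g) (ht : 0 ≤ t)
    (h : t ∈ zmultiples g) : ∃ n : ℕ, n • g = t := by
  obtain ⟨k, rfl⟩ := mem_zmultiples_iff.1 h
  rw [← zero_zsmul g, zsmul_le_zsmul_iff_left hg] at ht
  lift k to ℕ using ht
  exact ⟨k, (natCast_zsmul g k).symm⟩

variable (hA : ∀ S : Finset A, IsAddCyclic (closure (S : Set A)))
include hA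

theorem exists_pos_forall_mem_zmultiples {S : Finset A} {r : A} (hr : 0 < r) (hrS : r ∈ S) :
    ∃ g, 0 < g ∧ ∀ s ∈ S, s ∈ zmultiples g := by
  obtain ⟨g, hg⟩ := (AddSubgroup.isAddCyclic_iff_exists_zmultiples_eq_top _).1 (hA S)
  have hS : ∀ s ∈ S, s ∈ zmultiples g := fun s hs => hg ▸ subset_closure hs
  have hg0 : g ≠ 0 := by
    rintro rfl
    simpa [hr.ne'] using hS r hrS
  rcases hg0.lt_or_gt with hg0 | hg0
  · exact ⟨-g, neg_pos.2 hg0, by simpa only [zmultiples_neg] using hS⟩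
  · exact ⟨g, hg0, hS⟩

theorem exists_eq_nsmul_of_not_isAddCyclic (hcyc : ¬ IsAddCyclic A) {r : A} (hr : 0 < r) :
    ∃ r', 0 < r' ∧ ∃ m : ℕ, 2 ≤ m ∧ r = m • r' := by
  obtain ⟨y, hy⟩ : ∃ y, y ∉ zmultiples r := by
    by_contra! h
    exact hcyc ⟨r, h⟩
  obtain ⟨g, hg, hgS⟩ := exists_pos_forall_mem_zmultiples hA (S := {r, y}) hr (by simp)
  obtain ⟨m, rfl⟩ := exists_nsmul_eq_of_mem_zmultiples hg hr.le (hgS _ (by simp))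
  refine ⟨g, hg, m, ?_, rfl⟩
  by_contra! hm
  interval_cases m
  · simp at hr
  · exact hy (by simpa using hgS y (by simp))

theorem exists_pos_forall_mem_zmultiples_nsmul (hcyc : ¬ IsAddCyclic A) (S : Finset A) :
    ∃ r, 0 < r ∧ ∃ M : ℕ, 3 ≤ M ∧ ∀ s ∈ S, s ∈ zmultiples (M • r) := by
  have : Nontrivial A := by
    by_contra h
    exact hcyc (@isAddCyclic_of_subsingleton _ _ (not_nontrivial_iff_subsingleton.1 h))
  obtain ⟨g₀, hg₀⟩ := exists_zero_lt (α := A)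
  obtain ⟨g, hg, hgS⟩ := exists_pos_forall_mem_zmultiples hA hg₀ (Finset.mem_insert_self g₀ S)
  obtain ⟨g₁, hg₁, m₁, hm₁, rfl⟩ := exists_eq_nsmul_of_not_isAddCyclic hA hcyc hg
  obtain ⟨r, hr, m₂, hm₂, rfl⟩ := exists_eq_nsmul_of_not_isAddCyclic hA hcyc hg₁
  refine ⟨r, hr, m₁ * m₂, by nlinarith, fun s hs => ?_⟩
  rw [mul_comm, mul_nsmul]
  exact hgS s (Finset.mem_insert_of_mem hs)

end LinearOrderedAddCommGroup

theorem Polynomial.exists_eq_mul_of_three_le_natDegree {F : Type*} [Field F]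
    (hF : ∀ f : F[X], Irreducible f → f.degree ≤ 2) {p : F[X]} (hp : 3 ≤ p.natDegree) :
    ∃ q w : F[X], p = q * w ∧ 0 < q.natDegree ∧ 0 < w.natDegree := by
  have hp0 : p ≠ 0 := by rintro rfl; simp at hp
  obtain ⟨q, hq, w, rfl⟩ := WfDvdMonoid.exists_irreducible_factor
    (not_isUnit_of_natDegree_pos p (by omega)) hp0
  have hq2 : q.natDegree ≤ 2 := natDegree_le_iff_degree_le.2 (hF q hq)
  rw [natDegree_mul hq.ne_zero (right_ne_zero_of_mul hp0)] at hp
  exact ⟨q, w, rfl, hq.natDegree_pos, by omega⟩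

namespace AddMonoidAlgebra

section Units

variable {R A : Type*}

theorem card_support_le_one_of_isUnit [Semiring R] [NoZeroDivisors R] [AddMonoid A]
    [TwoUniqueSums A] {v : AddMonoidAlgebra R A} (hv : IsUnit v) : v.coeff.support.card ≤ 1 := by
  obtain ⟨w, hvw⟩ := hv.exists_right_inv
  by_contra! hcard
  have : Nontrivial (AddMonoidAlgebra R A) := nontrivial_of_ne v 0 (by rintro rfl; simp at hcard)
  have hw : w.coeff.support.Nonempty := by
    simpa [Finsupp.support_nonempty_iff] using right_ne_zero_of_mul_eq_one hvw
  obtain ⟨p₁, hp₁, p₂, hp₂, hne, hu₁, hu₂⟩ := TwoUniqueSums.uniqueAdd_of_one_lt_card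
    (lt_mul_of_lt_of_one_le hcard (Finset.card_pos.2 hw))
  -- a unique sum carries a nonzero coefficient of `v * w = 1`, so it is `0`
  have hzero : ∀ p ∈ v.coeff.support ×ˢ w.coeff.support,
      UniqueAdd v.coeff.support w.coeff.support p.1 p.2 → p.1 + p.2 = 0 := by
    rintro ⟨a, b⟩ hp hu
    rw [Finset.mem_product, Finsupp.mem_support_iff, Finsupp.mem_support_iff] at hp
    by_contra hab
    have := coeff_mul_add_of_uniqueAdd hu
    rw [hvw, one_def, coeff_single, Finsupp.single_eq_of_ne' (Ne.symm hab)] at this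
    exact mul_ne_zero hp.1 hp.2 this.symm
  obtain ⟨h₁, h₂⟩ := hu₁ (Finset.mem_product.1 hp₂).1 (Finset.mem_product.1 hp₂).2
    ((hzero p₂ hp₂ hu₂).trans (hzero p₁ hp₁ hu₁).symm)
  exact hne (Prod.ext h₁ h₂).symm

theorem isUnit_single [Semiring R] [AddGroup A] {c : R} (hc : IsUnit c) (s : A) :
    IsUnit (single s c) :=
  ⟨⟨single s c, single (-s) ↑hc.unit⁻¹, by simp [single_mul_single, one_def],
    by simp [single_mul_single, one_def]⟩, rfl⟩

theorem isUnit_iff_card_support_eq_one [DivisionRing R] [AddGroup A] [TwoUniqueSums A]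
    {v : AddMonoidAlgebra R A} : IsUnit v ↔ v.coeff.support.card = 1 := by
  refine ⟨fun hv => le_antisymm (card_support_le_one_of_isUnit hv) ?_, fun hv => ?_⟩
  · rw [Nat.one_le_iff_ne_zero, Ne, Finset.card_eq_zero, Finsupp.support_eq_empty, coeff_eq_zero]
    exact hv.ne_zero
  · obtain ⟨s, hc, hs⟩ := Finsupp.card_support_eq_one.1 hv
    rw [← ofCoeff_coeff v, hs]
    exact isUnit_single (Ne.isUnit hc) s

end Units

section Aeval

variable {R A : Type*} [CommSemiring R] [AddCommMonoid A]

theorem aeval_single_eq_mapDomain (r : A) (p : R[X]) :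
    aeval (single r (1 : R)) p = mapDomain (fun n : ℕ => n • r) (toFinsuppIso R p) := by
  induction p using Polynomial.induction_on' with
  | add p q hp hq => simp only [map_add, hp, hq, mapDomain_add]
  | monomial n c =>
    rw [aeval_monomial, single_pow, one_pow, coe_algebraMap, Function.comp_apply,
      Algebra.algebraMap_self, RingHom.id_apply, single_mul_single, zero_add, mul_one]
    simp [mapDomain_single]

theorem coeff_aeval_single_nsmul {r : A} (hr : Function.Injective fun n : ℕ => n • r)
    (p : R[X]) (n : ℕ) : (aeval (single r (1 : R)) p).coeff (n • r) = p.coeff n := by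
  rw [aeval_single_eq_mapDomain]
  exact Finsupp.mapDomain_apply hr _ n

theorem exists_aeval_single_eq {r : A} (hr : Function.Injective fun n : ℕ => n • r)
    (b : AddMonoidAlgebra R A) (hb : ∀ t ∈ b.coeff.support, ∃ n : ℕ, n • r = t) :
    ∃ p : R[X], aeval (single r (1 : R)) p = b := by
  refine ⟨(toFinsuppIso R).symm (comapDomain _ hr b), ?_⟩
  rw [aeval_single_eq_mapDomain, RingEquiv.apply_symm_apply]
  exact mapDomain_comapDomain (fun t ht => hb t ht) hr

theorem not_isUnit_aeval_single [NoZeroDivisors R] [TwoUniqueSums A] {r : A}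
    (hr : Function.Injective fun n : ℕ => n • r) {p : R[X]} (hp : 0 < p.natDegree)
    (hp0 : p.coeff 0 ≠ 0) : ¬ IsUnit (aeval (single r (1 : R)) p) := by
  intro h
  have h0 : (0 : ℕ) • r ∈ (aeval (single r (1 : R)) p).coeff.support := by
    rwa [Finsupp.mem_support_iff, coeff_aeval_single_nsmul hr]
  have hd : p.natDegree • r ∈ (aeval (single r (1 : R)) p).coeff.support := by
    rw [Finsupp.mem_support_iff, coeff_aeval_single_nsmul hr, coeff_natDegree]
    exact Polynomial.leadingCoeff_ne_zero.2 (ne_zero_of_natDegree_gt hp)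
  exact hp.ne (hr (Finset.card_le_one.1 (card_support_le_one_of_isUnit h) _ h0 _ hd))

theorem not_irreducible_aeval_single {F : Type*} [Field F] [TwoUniqueSums A]
    (hF : ∀ f : F[X], Irreducible f → f.degree ≤ 2) {r : A}
    (hr : Function.Injective fun n : ℕ => n • r) {p : F[X]} (hp : 3 ≤ p.natDegree)
    (hp0 : p.coeff 0 ≠ 0) : ¬ Irreducible (aeval (single r (1 : F)) p) := by
  obtain ⟨q, w, rfl, hq, hw⟩ := exists_eq_mul_of_three_le_natDegree hF hp
  rw [mul_coeff_zero] at hp0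
  intro h
  rw [map_mul] at h
  rcases h.isUnit_or_isUnit rfl with h | h
  · exact not_isUnit_aeval_single hr hq (left_ne_zero_of_mul hp0) h
  · exact not_isUnit_aeval_single hr hw (right_ne_zero_of_mul hp0) h

end Aeval

section LinearOrderedAddCommGroup

variable {A : Type*} [AddCommGroup A] [LinearOrder A] [IsOrderedAddMonoid A]

theorem exists_eq_single_min'_mul_aeval {R : Type*} [CommSemiring R] {r : A} (hr : 0 < r)
    {a : AddMonoidAlgebra R A} (ha : ∀ s ∈ a.coeff.support, s ∈ zmultiples r)
    (hne : a.coeff.support.Nonempty) :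
    ∃ p : R[X], a = single (a.coeff.support.min' hne) 1 * aeval (single r (1 : R)) p ∧
      ∀ n, p.coeff n = a.coeff (a.coeff.support.min' hne + n • r) := by
  set μ := a.coeff.support.min' hne
  have hμ : μ ∈ a.coeff.support := a.coeff.support.min'_mem hne
  have hinj := (nsmul_left_strictMono hr).injective
  set b := single (-μ) (1 : R) * a
  have hb : ∀ t, b.coeff t = a.coeff (μ + t) := fun t => by simp [b, coeff_single_mul_apply]
  obtain ⟨p, hp⟩ := exists_aeval_single_eq hinj b fun t ht => by
    rw [Finsupp.mem_support_iff, hb, ← Finsupp.mem_support_iff] at ht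
    exact exists_nsmul_eq_of_mem_zmultiples hr
      ((le_add_iff_nonneg_right μ).1 (a.coeff.support.min'_le _ ht))
      (by simpa using sub_mem (ha _ ht) (ha _ hμ))
  refine ⟨p, ?_, fun n => by rw [← coeff_aeval_single_nsmul hinj, hp, hb]⟩
  rw [hp, ← mul_assoc, single_mul_single, add_neg_cancel, one_mul, ← one_def, one_mul]

theorem not_irreducible_of_forall_mem_zmultiples {F : Type*} [Field F]
    (hF : ∀ f : F[X], Irreducible f → f.degree ≤ 2) {r : A} (hr : 0 < r) {M : ℕ} (hM : 3 ≤ M)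
    {a : AddMonoidAlgebra F A} (ha : ∀ s ∈ a.coeff.support, s ∈ zmultiples (M • r)) :
    ¬ Irreducible a := by
  intro hirr
  have hcard : 1 < a.coeff.support.card := by
    have h1 := isUnit_iff_card_support_eq_one.not.1 hirr.not_isUnit
    have h0 : a.coeff.support.card ≠ 0 := by simpa using hirr.ne_zero
    omega
  have hne : a.coeff.support.Nonempty := Finset.card_pos.1 (by omega)
  set μ := a.coeff.support.min' hne
  have hμ : μ ∈ a.coeff.support := a.coeff.support.min'_mem hne
  obtain ⟨p, hap, hcoeff⟩ := exists_eq_single_min'_mul_aeval hr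
    (fun s hs => zmultiples_le_of_mem (nsmul_mem (mem_zmultiples r) M) (ha s hs)) hne
  rw [hap, irreducible_isUnit_mul (isUnit_single isUnit_one _)] at hirr
  refine not_irreducible_aeval_single hF (nsmul_left_strictMono hr).injective ?_ ?_ hirr
  · obtain ⟨z, hz, hzμ⟩ := Finset.exists_mem_ne hcard μ
    obtain ⟨n, hn⟩ := exists_nsmul_eq_of_mem_zmultiples (nsmul_pos hr (by omega : M ≠ 0))
      (sub_nonneg.2 (a.coeff.support.min'_le z hz)) (sub_mem (ha z hz) (ha μ hμ))
    have hn0 : n ≠ 0 := by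
      rintro rfl
      exact hzμ (sub_eq_zero.1 (by rw [← hn, zero_smul]))
    calc 3 ≤ n * M := le_mul_of_one_le_of_le (Nat.one_le_iff_ne_zero.2 hn0) hM
      _ ≤ p.natDegree := le_natDegree_of_ne_zero <| by
        rw [hcoeff, mul_nsmul', hn, add_sub_cancel]
        exact Finsupp.mem_support_iff.1 hz
  · rw [hcoeff, zero_smul, add_zero]
    exact Finsupp.mem_support_iff.1 hμ

end LinearOrderedAddCommGroup

end AddMonoidAlgebra

/-- If `F` is a field in which every irreducible polynomial has degree at
most `2` (e.g. a real closed field) and `G` is a non-cyclic additive subgroup of `ℚ`, then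
the group algebra `F[G]` is an antimatter domain. -/
theorem real_closed_group_algebra_antimatter (F : Type*) [Field F]
    (hF : ∀ f : Polynomial F, Irreducible f → f.degree ≤ 2)
    (G : AddSubgroup ℚ) (hG : ¬ IsAddCyclic G) :
    IsDomain (AddMonoidAlgebra F G) ∧
      ∀ a : AddMonoidAlgebra F G, ¬ Irreducible a := by
  refine ⟨inferInstance, fun a => ?_⟩
  obtain ⟨r, hr, M, hM, ha⟩ :=
    exists_pos_forall_mem_zmultiples_nsmul G.isAddCyclic_closure_finset hG a.coeff.support
  exact not_irreducible_of_forall_mem_zmultiples hF hr hM ha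
end

section
/- Let F be an algebraically closed field and let G be an additive subgroup of ℚ that is not cyclic. Then the group algebra F[G] is an antimatter domain: F[G] is an integral domain with no irreducible elements. -/
open Finset

namespace AddSubgroup

theorem exists_forall_mem_zmultiples_of_rat (G : AddSubgroup ℚ) (S : Finset G) :
    ∃ g : G, ∀ s ∈ S, s ∈ zmultiples g := by
  set D : ℕ := ∏ s ∈ S, (s : ℚ).den
  have hD : D ≠ 0 := prod_ne_zero_iff.mpr fun s _ => (s : ℚ).den_nz
  have hSD : ∀ s ∈ S, (s : ℚ) ∈ zmultiples (D : ℚ)⁻¹ := fun s hs => by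
    obtain ⟨e, he⟩ : (s : ℚ).den ∣ D := dvd_prod_of_mem (fun s : G => (s : ℚ).den) hs
    refine ⟨(s : ℚ).num * e, ?_⟩
    have he0 : (e : ℚ) ≠ 0 := Nat.cast_ne_zero.mpr (right_ne_zero_of_mul (he ▸ hD))
    change _ • _ = _
    rw [he, zsmul_eq_mul]
    push_cast
    field_simp
    rw [mul_comm, Rat.mul_den_eq_num]
  have : IsAddCyclic ↥(G ⊓ zmultiples (D : ℚ)⁻¹) := isAddCyclic_of_le inf_le_right
  obtain ⟨q, hq⟩ := IsAddCyclic.exists_generator (α := ↥(G ⊓ zmultiples (D : ℚ)⁻¹))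
  refine ⟨⟨q, q.2.1⟩, fun s hs => ?_⟩
  obtain ⟨k, hk⟩ := mem_zmultiples_iff.mp (hq ⟨s, s.2, hSD s hs⟩)
  exact ⟨k, Subtype.ext (by simpa using congrArg Subtype.val hk)⟩

theorem exists_nsmul_eq_of_not_isAddCyclic {G : AddSubgroup ℚ} (hG : ¬IsAddCyclic G) (g : G) :
    ∃ c : G, ∃ n : ℕ, 2 ≤ n ∧ n • c = g := by
  obtain ⟨h, hh⟩ : ∃ h : G, h ∉ zmultiples g := by
    by_contra! H
    exact hG ⟨g, H⟩
  obtain ⟨c, hc⟩ := exists_forall_mem_zmultiples_of_rat G {g, h}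
  obtain ⟨k, rfl⟩ := mem_zmultiples_iff.mp (hc g (by simp))
  obtain ⟨l, rfl⟩ := mem_zmultiples_iff.mp (hc h (by simp))
  by_cases hk : 2 ≤ k.natAbs
  · refine ⟨k.sign • c, k.natAbs, hk, ?_⟩
    rw [← natCast_zsmul, smul_smul, mul_comm, Int.sign_mul_natAbs]
  rcases (by omega : k = 0 ∨ k = 1 ∨ k = -1) with rfl | rfl | rfl
  · exact ⟨0, 2, le_rfl, by simp⟩
  · exact absurd ⟨l, by simp⟩ hh
  · exact absurd ⟨-l, by simp⟩ hh

end AddSubgroup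

namespace LaurentPolynomial

open Polynomial

theorem exists_T_sub_C_dvd_of_not_isUnit {F : Type*} [Field F] [IsAlgClosed F]
    {p : F[T;T⁻¹]} (hp0 : p ≠ 0) (hp : ¬IsUnit p) : ∃ r : F, r ≠ 0 ∧ T 1 - C r ∣ p := by
  obtain ⟨n, f, hf⟩ := exists_T_pow p
  have hTn : IsUnit (T n : F[T;T⁻¹]) := isUnit_T _
  have hf0 : f ≠ 0 := by
    rintro rfl
    exact hp0 (hTn.mul_left_eq_zero.mp (by rw [← hf, map_zero]))
  by_contra! hdvd
  have hroots : ∀ r ∈ f.roots, r = 0 := fun r hr => by_contra fun hr0 => hdvd r hr0 <| by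
    rw [← hTn.dvd_mul_right, ← hf]
    simpa using map_dvd toLaurent (dvd_iff_isRoot.mpr (isRoot_of_mem_roots hr))
  suffices IsUnit (toLaurent f) from hp (isUnit_of_mul_isUnit_left (hf ▸ this))
  rw [← C_leadingCoeff_mul_prod_multiset_X_sub_C (IsAlgClosed.card_roots_eq_natDegree (p := f)),
    map_mul, map_multiset_prod, Multiset.map_map]
  refine IsUnit.mul ?_ (IsUnit.multisetProd_iff.mpr ?_)
  · exact ((leadingCoeff_ne_zero.mpr hf0).isUnit.map Polynomial.C).map toLaurent
  · simp only [Multiset.mem_map, Function.comp_apply]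
    rintro _ ⟨r, hr, rfl⟩
    rw [hroots r hr, map_zero, sub_zero, toLaurent_X]
    exact isUnit_T 1

end LaurentPolynomial

namespace AddMonoidAlgebra

section NoZeroDivisors

variable {R A : Type*} [Semiring R] [NoZeroDivisors R]

theorem one_lt_card_support_mul [Add A] [TwoUniqueSums A] {f g : R[A]}
    (h : 1 < #f.coeff.support * #g.coeff.support) : 1 < #(f * g).coeff.support := by
  obtain ⟨p, hp, q, hq, hpq, hup, huq⟩ := TwoUniqueSums.uniqueAdd_of_one_lt_card h
  rw [mem_product] at hp hq
  refine one_lt_card.mpr ⟨p.1 + p.2, ?_, q.1 + q.2, ?_, fun he => hpq ?_⟩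
  · rw [Finsupp.mem_support_iff, coeff_mul_add_of_uniqueAdd hup]
    exact mul_ne_zero (Finsupp.mem_support_iff.mp hp.1) (Finsupp.mem_support_iff.mp hp.2)
  · rw [Finsupp.mem_support_iff, coeff_mul_add_of_uniqueAdd huq]
    exact mul_ne_zero (Finsupp.mem_support_iff.mp hq.1) (Finsupp.mem_support_iff.mp hq.2)
  · exact Prod.ext_iff.mpr (huq hp.1 hp.2 he)

variable [AddMonoid A] [TwoUniqueSums A]

theorem card_support_le_one_of_isUnit_s14 {u : R[A]} (hu : IsUnit u) : #u.coeff.support ≤ 1 := by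
  obtain ⟨v, huv⟩ := hu.exists_right_inv
  by_contra! hu1
  have hv : v.coeff.support.Nonempty := by
    rw [Finsupp.support_nonempty_iff, Ne, coeff_eq_zero]
    rintro rfl
    have := subsingleton_of_zero_eq_one ((mul_zero u).symm.trans huv)
    simp [Subsingleton.elim u 0] at hu1
  have := one_lt_card_support_mul (lt_mul_of_lt_of_one_le hu1 hv.card_pos)
  rw [huv] at this
  refine this.not_ge (card_le_one.mpr fun a ha b hb => ?_)
  have h1 := support_coeff_one_subset (k := R) (G := A)
  rw [mem_zero.mp (h1 ha), mem_zero.mp (h1 hb)]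

theorem not_isUnit_of_coeff_ne_zero {f : R[A]} {a b : A} (hab : a ≠ b) (ha : f.coeff a ≠ 0)
    (hb : f.coeff b ≠ 0) : ¬IsUnit f := fun hf =>
  (card_support_le_one_of_isUnit_s14 hf).not_gt <|
    one_lt_card.mpr ⟨a, Finsupp.mem_support_iff.mpr ha, b, Finsupp.mem_support_iff.mpr hb, hab⟩

end NoZeroDivisors

theorem not_isUnit_single_sub_single {R A : Type*} [Ring R] [NoZeroDivisors R] [Nontrivial R]
    [AddMonoid A] [TwoUniqueSums A] {c : A} (hc : c ≠ 0) {s : R} (hs : s ≠ 0) :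
    ¬IsUnit (single c 1 - single 0 s) :=
  not_isUnit_of_coeff_ne_zero hc (by simp [hc]) (by simp [hc.symm, hs])

section Binomial

variable {R A : Type*} [CommRing R]

theorem single_nsmul_sub_single_pow [AddCommMonoid A] (c : A) (s : R) (n : ℕ) :
    single (n • c) 1 - single 0 (s ^ n) =
      (single c 1 - single 0 s) * ∑ i ∈ range n, single (i • c) (s ^ (n - 1 - i)) := by
  have hterm (i : ℕ) :
      single (i • c) (s ^ (n - 1 - i)) = single c 1 ^ i * single 0 s ^ (n - 1 - i) := by
    rw [single_pow, single_pow, single_mul_single, one_pow, smul_zero, add_zero, one_mul]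
  rw [sum_congr rfl fun i _ => hterm i, mul_comm, geom_sum₂_mul, single_pow, single_pow, one_pow,
    smul_zero]

variable [AddCommGroup A] [IsAddTorsionFree A]

theorem coeff_sum_single_nsmul {c : A} (hc : c ≠ 0) (f : ℕ → R) {n j : ℕ} (hj : j < n) :
    (∑ i ∈ range n, single (i • c) (f i)).coeff (j • c) = f j := by
  have hinj : Function.Injective fun i : ℕ => i • c := fun i k hik =>
    Nat.cast_injective (smul_left_injective ℤ hc (by simpa only [natCast_zsmul] using hik))
  rw [coeff_sum, Finsupp.finsetSum_apply, sum_eq_single_of_mem j (mem_range.mpr hj)]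
  · simp
  · intro i _ hij
    simp [hinj.ne hij]

variable [IsDomain R] [TwoUniqueSums A]

theorem not_isUnit_sum_single_nsmul {c : A} (hc : c ≠ 0) {f : ℕ → R} {n : ℕ} (hn : 2 ≤ n)
    (h0 : f 0 ≠ 0) (h1 : f 1 ≠ 0) : ¬IsUnit (∑ i ∈ range n, single (i • c) (f i)) := by
  refine not_isUnit_of_coeff_ne_zero (a := 0 • c) (b := 1 • c) (by simpa using hc.symm) ?_ ?_
  · rwa [coeff_sum_single_nsmul hc f (by omega)]
  · rwa [coeff_sum_single_nsmul hc f (by omega)]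

theorem not_irreducible_of_single_nsmul_sub_single_pow_dvd {c : A} (hc : c ≠ 0) {s : R}
    (hs : s ≠ 0) {n : ℕ} (hn : 2 ≤ n) {a : R[A]}
    (ha : single (n • c) 1 - single 0 (s ^ n) ∣ a) : ¬Irreducible a := by
  obtain ⟨q, rfl⟩ := ha
  rw [single_nsmul_sub_single_pow, mul_assoc]
  intro h
  rcases h.isUnit_or_isUnit rfl with h | h
  · exact not_isUnit_single_sub_single hc hs h
  · exact not_isUnit_sum_single_nsmul (f := fun i => s ^ (n - 1 - i)) hc hn
      (pow_ne_zero (n - 1 - 0) hs) (pow_ne_zero (n - 1 - 1) hs) (isUnit_of_mul_isUnit_left h)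

end Binomial

theorem exists_single_sub_single_dvd {F A : Type*} [Field F] [IsAlgClosed F] [AddCommGroup A]
    [IsAddTorsionFree A] {g : A} (hg : g ≠ 0) {a : F[A]} (ha0 : a ≠ 0) (ha : ¬IsUnit a)
    (hsupp : ∀ x ∈ a.coeff.support, x ∈ AddSubgroup.zmultiples g) :
    ∃ r : F, r ≠ 0 ∧ single g 1 - single 0 r ∣ a := by
  have hinj : Function.Injective (zmultiplesHom A g) := smul_left_injective ℤ hg
  let Φ := mapDomainRingHom F (zmultiplesHom A g)
  set p : LaurentPolynomial F := comapDomain _ hinj a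
  have hp : Φ p = a := mapDomain_comapDomain hsupp hinj
  obtain ⟨r, hr, hdvd⟩ := LaurentPolynomial.exists_T_sub_C_dvd_of_not_isUnit
    (p := p) (fun h => ha0 (by rw [← hp, h, map_zero])) (fun h => ha (hp ▸ h.map Φ))
  refine ⟨r, hr, hp ▸ ?_⟩
  have : Φ (LaurentPolynomial.T 1 - LaurentPolynomial.C r) = single g 1 - single 0 r := by
    rw [map_sub]
    change mapDomain _ (single (1 : ℤ) (1 : F)) - mapDomain _ (single (0 : ℤ) r) = _
    rw [mapDomain_single, mapDomain_single, zmultiplesHom_apply, zmultiplesHom_apply, one_zsmul,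
      zero_zsmul]
  exact this ▸ map_dvd Φ hdvd

end AddMonoidAlgebra

/-- If `F` is an algebraically closed field and `G` is a non-cyclic
additive subgroup of `ℚ`, then the group algebra `F[G]` is an antimatter domain. -/
theorem alg_closed_group_algebra_antimatter (F : Type*) [Field F] [IsAlgClosed F]
    (G : AddSubgroup ℚ) (hG : ¬ IsAddCyclic G) :
    IsDomain (AddMonoidAlgebra F G) ∧
      ∀ a : AddMonoidAlgebra F G, ¬ Irreducible a := by
  refine ⟨inferInstance, fun a ha => ?_⟩
  have := Nontrivial.of_not_isAddCyclic hG
  -- `g₀` is thrown into the support only to force the generator `g` to be nonzero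
  obtain ⟨g₀, hg₀⟩ := exists_ne (0 : G)
  obtain ⟨g, hg⟩ :=
    AddSubgroup.exists_forall_mem_zmultiples_of_rat G (insert g₀ a.coeff.support)
  have hg0 : g ≠ 0 := by
    rintro rfl
    simpa [hg₀] using hg g₀ (mem_insert_self _ _)
  obtain ⟨r, hr, hdvd⟩ := AddMonoidAlgebra.exists_single_sub_single_dvd hg0 ha.ne_zero
    ha.not_isUnit fun x hx => hg x (mem_insert_of_mem hx)
  obtain ⟨c, n, hn, rfl⟩ := AddSubgroup.exists_nsmul_eq_of_not_isAddCyclic hG g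
  obtain ⟨s, rfl⟩ := IsAlgClosed.exists_pow_nat_eq r (by omega : 0 < n)
  refine AddMonoidAlgebra.not_irreducible_of_single_nsmul_sub_single_pow_dvd ?_ ?_ hn hdvd ha
  · rintro rfl
    exact hg0 (smul_zero n)
  · rintro rfl
    exact hr (zero_pow (by omega))
end

section
/- The subring ℤ + xℚ[x] of the polynomial ring ℚ[x], consisting of all polynomials with rational coefficients whose constant term is an integer, is not an atomic domain. -/
/-- The subring `ℤ + xℚ[x]` of `ℚ[x]`: rational polynomials with integer constant term. -/
noncomputable def intPlusXQX : Subring (Polynomial ℚ) where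
  carrier := {f | ∃ k : ℤ, f.coeff 0 = (k : ℚ)}
  zero_mem' := ⟨0, by simp⟩
  one_mem' := ⟨1, by simp⟩
  add_mem' := by
    rintro f g ⟨k, hk⟩ ⟨l, hl⟩
    exact ⟨k + l, by simp [hk, hl]⟩
  mul_mem' := by
    rintro f g ⟨k, hk⟩ ⟨l, hl⟩
    exact ⟨k * l, by simp [Polynomial.mul_coeff_zero, hk, hl]⟩
  neg_mem' := by
    rintro f ⟨k, hk⟩
    exact ⟨-k, by simp [hk]⟩

/-- The ring `ℤ + xℚ[x]` is not an atomic domain. -/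
theorem intPlusXQX_not_atomic : ¬ AtomicDomain intPlusXQX := by
  intro h
  set S := intPlusXQX with hS
  let a : S := ⟨Polynomial.X, ⟨0, by simp⟩⟩
  have ha0 : a ≠ 0 := by
    intro hx
    have : (Polynomial.X : Polynomial ℚ) = 0 := congrArg Subtype.val hx
    simpa using this
  have hau : ¬ IsUnit a := by
    intro hu
    have := hu.map S.subtype
    exact Polynomial.not_isUnit_X (R := ℚ) this
  obtain ⟨l, hl, hprod⟩ := h a ha0 hau
  let φ : S →+* ℚ := (Polynomial.constantCoeff).comp S.subtype
  have hφprod : (l.map φ).prod = 0 := by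
    rw [← map_multiset_prod, hprod]
    simp [φ, a]
  have h0mem : (0 : ℚ) ∈ l.map φ := by
    rw [← Multiset.prod_eq_zero_iff]
    exact hφprod
  obtain ⟨f, hfl, hf0⟩ := Multiset.mem_map.mp h0mem
  have hfirr : Irreducible f := hl f hfl
  have hfdvd : f ∣ a := hprod ▸ Multiset.dvd_prod hfl
  obtain ⟨c, hc⟩ := hfdvd
  have hfX : (f : Polynomial ℚ) ∣ Polynomial.X := ⟨(c : Polynomial ℚ), congrArg Subtype.val hc⟩
  have hXf : (Polynomial.X : Polynomial ℚ) ∣ (f : Polynomial ℚ) :=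
    Polynomial.X_dvd_iff.mpr hf0
  obtain ⟨u, hu⟩ := associated_of_dvd_dvd hXf hfX
  obtain ⟨q, hq, hCq⟩ := Polynomial.isUnit_iff.mp u.isUnit
  let g : S := ⟨Polynomial.C (q/2) * Polynomial.X, ⟨0, by simp⟩⟩
  have hfg : f = 2 * g := by
    apply Subtype.ext
    show (f : Polynomial ℚ) = ((2 * g : S) : Polynomial ℚ)
    rw [← hu, ← hCq]
    push_cast
    have h2C : Polynomial.C q = 2 * Polynomial.C (q/2) := by
      rw [two_mul, ← Polynomial.C_add]
      norm_num
    have h2S : (((2:S)) : Polynomial ℚ) = 2 := by norm_cast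
    rw [h2C, h2S]
    ring
  rcases hfirr.isUnit_or_isUnit hfg with h2 | hg
  · obtain ⟨v, hv⟩ := isUnit_iff_exists_inv.mp h2
    obtain ⟨k, hk⟩ := v.2
    have hφv : φ v = (k : ℚ) := hk
    have h2v : (2 : ℚ) * (k : ℚ) = 1 := by
      have h1 := congrArg φ hv
      rw [map_mul, map_one] at h1
      have hφ2 : φ (2 : S) = 2 := by
        show (((2:S)) : Polynomial ℚ).coeff 0 = 2
        rw [show (((2:S)) : Polynomial ℚ) = 2 from by norm_cast]
        simp
      rwa [hφ2, hφv] at h1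
    have hki : (2 * k : ℤ) = 1 := by exact_mod_cast h2v
    omega
  · have hgu : IsUnit (g : Polynomial ℚ) := hg.map S.subtype
    have hXg : (Polynomial.X : Polynomial ℚ) ∣ (g : Polynomial ℚ) :=
      ⟨Polynomial.C (q/2), by ring⟩
    exact Polynomial.not_isUnit_X (R := ℚ) (isUnit_of_dvd_unit hXg hgu)
end

section
/- Let G be an additive subgroup of ℝ and let ε > 0 be a real number. Then M := {0} ∪ {g ∈ G : g ≥ ε} is a submonoid of (ℝ, +) that satisfies the ACCP, i.e. every ascending chain (b_n + M)_{n≥1} of principal ideals of M eventually stabilizes. -/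
/-
Every nonzero element of `M` is at least `ε`. In a chain `b₀ + M ⊆ b₁ + M ⊆ ⋯` each generator
lies in `M ⊆ [0, ∞)` and each step `bₙ - bₙ₊₁` lies in `M`, so the generators form a sequence bounded
below in which every step is either `0` or a drop of at least `ε`. Once `b_N` is within `ε` of the
infimum of the sequence no further drop is possible, so the chain is constant from `N` on.
-/

theorem isSubmonoidSet_zero_union_ge {α : Type*} [AddCommGroup α] [LinearOrder α]
    [IsOrderedAddMonoid α] (G : AddSubmonoid α) {ε : α} (hε : 0 ≤ ε) :
    IsSubmonoidSet (({0} : Set α) ∪ {g : α | g ∈ G ∧ ε ≤ g}) := by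
  refine ⟨Or.inl rfl, ?_⟩
  rintro a (rfl | ⟨haG, haε⟩) b (rfl | ⟨hbG, hbε⟩)
  · simp
  · simpa using Or.inr ⟨hbG, hbε⟩
  · simpa using Or.inr ⟨haG, haε⟩
  · exact Or.inr ⟨G.add_mem haG hbG, le_add_of_le_of_nonneg haε (hε.trans hbε)⟩

theorem exists_forall_ge_eq_of_bddBelow_of_drop {b : ℕ → ℝ} {ε : ℝ} (hε : 0 < ε)
    (hb : BddBelow (Set.range b)) (hdrop : ∀ n, b (n + 1) = b n ∨ b (n + 1) + ε ≤ b n) :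
    ∃ N, ∀ n, N ≤ n → b n = b N := by
  obtain ⟨N, hN⟩ := exists_lt_of_ciInf_lt (lt_add_of_pos_right (⨅ n, b n) hε)
  refine ⟨N, fun n hn => ?_⟩
  induction n, hn using Nat.le_induction with
  | base => rfl
  | succ n _ ih =>
    have hinf : ⨅ n, b n ≤ b (n + 1) := ciInf_le hb (n + 1)
    rcases hdrop n with h | h
    · rw [h, ih]
    · linarith

theorem satisfiesACCPSet_of_subset_zero_union_Ici {S : Set ℝ} {ε : ℝ} (hε : 0 < ε)
    (h0 : (0 : ℝ) ∈ S) (hS : S ⊆ {0} ∪ Set.Ici ε) : SatisfiesACCPSet S := by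
  intro b hbS hchain
  have hnonneg : ∀ x ∈ S, 0 ≤ x := fun x hx => by
    rcases hS hx with rfl | hx
    · rfl
    · exact hε.le.trans hx
  have hdrop : ∀ n, b (n + 1) = b n ∨ b (n + 1) + ε ≤ b n := fun n => by
    obtain ⟨m, hm, hbm⟩ := hchain n ⟨0, h0, (add_zero _).symm⟩
    rcases hS hm with rfl | hm
    · exact Or.inl (by simpa using hbm.symm)
    · exact Or.inr (by rw [hbm]; exact add_le_add_right hm _)
  have hb : BddBelow (Set.range b) := ⟨0, by rintro _ ⟨n, rfl⟩; exact hnonneg _ (hbS n)⟩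
  obtain ⟨N, hN⟩ := exists_forall_ge_eq_of_bddBelow_of_drop hε hb hdrop
  exact ⟨N, fun n hn => by rw [hN n hn]⟩

/-- If `G` is an additive subgroup of `ℝ` and `ε > 0`, then
`M = {0} ∪ {g ∈ G : g ≥ ε}` is a submonoid of `(ℝ, +)` satisfying the ACCP. -/
theorem truncated_subgroup_ACCP (G : AddSubgroup ℝ) (ε : ℝ) (hε : 0 < ε) :
    IsSubmonoidSet (({0} : Set ℝ) ∪ {g : ℝ | g ∈ G ∧ ε ≤ g}) ∧
      SatisfiesACCPSet (({0} : Set ℝ) ∪ {g : ℝ | g ∈ G ∧ ε ≤ g}) := by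
  refine ⟨isSubmonoidSet_zero_union_ge G.toAddSubmonoid hε.le,
    satisfiesACCPSet_of_subset_zero_union_Ici hε (Or.inl rfl)
      (Set.union_subset_union_right _ fun _ hg => hg.2)⟩
end

section
/- Let p be a prime, let G be an additive subgroup of ℝ, let ε > 0, and let M := {0} ∪ {g ∈ G : g ≥ ε}, a submonoid of (ℝ, +). Then the monoid algebra 𝔽_p[M] over the field with p elements is hereditarily atomic: 𝔽_p[M] is an integral domain and every subring of 𝔽_p[M] is atomic. -/
open scoped NNReal

theorem Subring.isUnit_of_isUnit_coe {R : Type*} [Ring R]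
    (hR : ∀ u : R, IsUnit u → u ∈ (⊥ : Subring R)) {S : Subring R} {a : S}
    (ha : IsUnit (a : R)) : IsUnit a := by
  obtain ⟨u, hu⟩ := ha
  have hinv : (↑u⁻¹ : R) ∈ S := (bot_le : (⊥ : Subring R) ≤ S) (hR _ (Units.isUnit u⁻¹))
  exact ⟨⟨a, ⟨_, hinv⟩, Subtype.ext (by simp [← hu]), Subtype.ext (by simp [← hu])⟩, rfl⟩

theorem ZMod.ringHom_mem_bot {n : ℕ} {R : Type*} [Ring R] (f : ZMod n →+* R) (c : ZMod n) :
    f c ∈ (⊥ : Subring R) := by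
  obtain ⟨z, rfl⟩ := ZMod.intCast_surjective c
  exact Subring.mem_bot.2 ⟨z, (map_intCast f z).symm⟩

section Degree

variable {A Γ : Type*} [CommRing A] [AddCommMonoid Γ] [LinearOrder Γ] [IsOrderedCancelAddMonoid Γ]
  [Archimedean Γ] {d : A → Γ} {ε : Γ}

theorem atomicDomain_of_degree (hε : 0 < ε)
    (hmul : ∀ a b, a ≠ 0 → b ≠ 0 → d (a * b) = d a + d b)
    (hge : ∀ a, a ≠ 0 → ¬IsUnit a → ε ≤ d a) : AtomicDomain A := by
  suffices h : ∀ n : ℕ, ∀ a, d a ≤ n • ε → a ≠ 0 → ¬IsUnit a →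
      ∃ l : Multiset A, (∀ x ∈ l, Irreducible x) ∧ l.prod = a by
    intro a ha hu
    obtain ⟨n, hn⟩ := Archimedean.arch (d a) hε
    exact h n a hn ha hu
  intro n
  induction n with
  | zero =>
    intro a hda ha hu
    exact absurd (hε.trans_le ((hge a ha hu).trans (by simpa using hda))) (lt_irrefl 0)
  | succ n ih =>
    intro a hda ha hu
    by_cases hirr : Irreducible a
    · exact ⟨{a}, by simpa using hirr, by simp⟩
    obtain ⟨b, c, rfl, hb, hc⟩ : ∃ b c, a = b * c ∧ ¬IsUnit b ∧ ¬IsUnit c := by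
      simpa [irreducible_iff, hu] using hirr
    have hb0 : b ≠ 0 := left_ne_zero_of_mul ha
    have hc0 : c ≠ 0 := right_ne_zero_of_mul ha
    have hfactor : ∀ x y, x ≠ 0 → y ≠ 0 → ¬IsUnit y → d (x * y) ≤ (n + 1) • ε → d x ≤ n • ε := by
      intro x y hx hy hyu hxy
      refine le_of_add_le_add_right (a := ε) ?_
      calc d x + ε ≤ d x + d y := by gcongr; exact hge y hy hyu
        _ ≤ n • ε + ε := by rw [← hmul x y hx hy, ← succ_nsmul]; exact hxy
    obtain ⟨lb, hlb, hlb_prod⟩ := ih b (hfactor b c hb0 hc0 hc hda) hb0 hb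
    obtain ⟨lc, hlc, hlc_prod⟩ := ih c (hfactor c b hc0 hb0 hb (mul_comm b c ▸ hda)) hc0 hc
    refine ⟨lb + lc, fun x hx => ?_, by rw [Multiset.prod_add, hlb_prod, hlc_prod]⟩
    exact (Multiset.mem_add.1 hx).elim (hlb x) (hlc x)

theorem atomicDomain_subring_of_degree (hε : 0 < ε)
    (hmul : ∀ a b, a ≠ 0 → b ≠ 0 → d (a * b) = d a + d b)
    (hge : ∀ a, a ≠ 0 → ¬IsUnit a → ε ≤ d a)
    (hA : ∀ u : A, IsUnit u → u ∈ (⊥ : Subring A)) (S : Subring A) : AtomicDomain S :=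
  atomicDomain_of_degree (d := fun a : S => d a) hε
    (fun a b ha hb => hmul a b (by exact_mod_cast ha) (by exact_mod_cast hb))
    (fun a ha hu => hge a (by exact_mod_cast ha) (mt (Subring.isUnit_of_isUnit_coe hA) hu))

end Degree

namespace AddMonoidAlgebra

variable {k M : Type*} [AddCommMonoid M] {D : M →+ ℝ≥0}

theorem eq_single_zero_of_support_subset [Semiring k] {f : AddMonoidAlgebra k M}
    (h : f.coeff.support ⊆ {0}) : f = single 0 (f.coeff 0) :=
  congrArg ofCoeff (Finsupp.support_subset_singleton.1 h)

theorem supDegree_mul_of_ne_zero [Semiring k] [NoZeroDivisors k] (hD : Function.Injective D)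
    {f g : AddMonoidAlgebra k M} (hf : f ≠ 0) (hg : g ≠ 0) :
    (f * g).supDegree D = f.supDegree D + g.supDegree D :=
  supDegree_mul hD (map_add D)
    (mul_ne_zero ((leadingCoeff_ne_zero hD).2 hf) ((leadingCoeff_ne_zero hD).2 hg)) hf hg

theorem eq_single_zero_of_isUnit [Semiring k] [NoZeroDivisors k] [Nontrivial k]
    (hD : Function.Injective D) {u : AddMonoidAlgebra k M} (hu : IsUnit u) :
    u = single 0 (u.coeff 0) := by
  obtain ⟨v, huv⟩ := hu.exists_right_inv
  have hdeg : u.supDegree D + v.supDegree D = 0 := by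
    rw [← supDegree_mul_of_ne_zero hD (left_ne_zero_of_mul_eq_one huv)
      (right_ne_zero_of_mul_eq_one huv), huv, one_def, supDegree_single_ne_zero _ one_ne_zero,
      map_zero]
  refine eq_single_zero_of_support_subset fun m hm => Finset.mem_singleton.2 (hD ?_)
  rw [map_zero, ← nonpos_iff_eq_zero, ← (add_eq_zero.1 hdeg).1]
  exact Finset.le_sup hm

theorem le_supDegree_of_not_isUnit [Field k] {ε : ℝ≥0} (hε : ∀ m, m ≠ 0 → ε ≤ D m)
    {f : AddMonoidAlgebra k M} (hf : f ≠ 0) (hu : ¬IsUnit f) : ε ≤ f.supDegree D := by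
  obtain ⟨m, hm, hm0⟩ : ∃ m ∈ f.coeff.support, m ≠ 0 := by
    by_contra! h
    have hf0 := eq_single_zero_of_support_subset fun m hm => Finset.mem_singleton.2 (h m hm)
    have hc : f.coeff 0 ≠ 0 := fun h0 => hf (by rw [hf0, h0, single_zero])
    exact hu (hf0 ▸ (isUnit_iff_ne_zero.2 hc).map (singleZeroRingHom (M := M)))
  exact (hε m hm0).trans (Finset.le_sup hm)

theorem atomicDomain_subring_zmod {p : ℕ} [Fact p.Prime] (hD : Function.Injective D)
    {ε : ℝ≥0} (hε : 0 < ε)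
    (hεD : ∀ m, m ≠ 0 → ε ≤ D m) (S : Subring (AddMonoidAlgebra (ZMod p) M)) : AtomicDomain S :=
  atomicDomain_subring_of_degree hε (fun _ _ ha hb => supDegree_mul_of_ne_zero hD ha hb)
    (fun _ ha hu => le_supDegree_of_not_isUnit hεD ha hu)
    (fun u hu => by
      rw [eq_single_zero_of_isUnit hD hu]
      exact ZMod.ringHom_mem_bot (singleZeroRingHom (M := M)) (u.coeff 0)) S

end AddMonoidAlgebra

/-- Let `p` be a prime, `G` an additive subgroup of `ℝ`, `ε > 0`, and `M`
the submonoid `{0} ∪ {g ∈ G : g ≥ ε}` of `(ℝ, +)`. Then the monoid algebra `𝔽_p[M]` is a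
hereditarily atomic integral domain: it is a domain and every subring of it is atomic. -/
theorem truncated_monoid_algebra_hereditarily_atomic (p : ℕ) (hp : p.Prime)
    (G : AddSubgroup ℝ) (ε : ℝ) (hε : 0 < ε) (M : AddSubmonoid ℝ)
    (hM : (M : Set ℝ) = ({0} : Set ℝ) ∪ {g : ℝ | g ∈ G ∧ ε ≤ g}) :
    IsDomain (AddMonoidAlgebra (ZMod p) M) ∧
      ∀ S : Subring (AddMonoidAlgebra (ZMod p) M), AtomicDomain S := by
  have : Fact p.Prime := ⟨hp⟩
  have hmem : ∀ m ∈ M, m = 0 ∨ ε ≤ m := fun m hm =>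
    ((Set.ext_iff.1 hM m).1 hm).imp id And.right
  let D : M →+ ℝ≥0 :=
    { toFun m := ⟨m, (hmem m m.2).elim (fun h => h.ge) hε.le.trans⟩
      map_zero' := rfl
      map_add' _ _ := rfl }
  have hD : Function.Injective D := fun _ _ h => Subtype.ext (congrArg NNReal.toReal h)
  have hεD : ∀ m, m ≠ 0 → ε.toNNReal ≤ D m := fun m hm =>
    Real.toNNReal_le_iff_le_coe.2 ((hmem m m.2).resolve_left (Subtype.coe_ne_coe.2 hm))
  have : UniqueSums M := UniqueSums.of_injective_addHom D.toAddHom hD inferInstance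
  exact ⟨inferInstance,
    AddMonoidAlgebra.atomicDomain_subring_zmod hD (Real.toNNReal_pos.2 hε) hεD⟩
end

section
/- Let M be the submonoid of (ℚ, +) generated by {1/p : p prime}, let q be a prime, and let x denote the monomial of exponent 1 in the monoid algebra 𝔽_q[M]. Then the set of factorization lengths of x, i.e. the set of natural numbers n such that x is a product of n irreducible elements of 𝔽_q[M], equals the set of all primes; in particular, 𝔽_q[M] is not a bounded factorization domain. -/
def primeReciprocalsMonoid : AddSubmonoid ℚ :=
  AddSubmonoid.closure {x : ℚ | ∃ p : ℕ, p.Prime ∧ x = 1 / (p : ℚ)}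

open Finset

def factorizationLengths {α : Type*} [CommMonoid α] (a : α) : Set ℕ :=
  {n | ∃ l : Multiset α, Multiset.card l = n ∧ (∀ y ∈ l, Irreducible y) ∧ l.prod = a}

def addFactorizationLengths {α : Type*} [AddCommMonoid α] (a : α) : Set ℕ :=
  {n | ∃ s : Multiset α, Multiset.card s = n ∧ (∀ y ∈ s, AddIrreducible y) ∧ s.sum = a}

namespace AddMonoidAlgebra

variable {R A : Type*}

theorem exists_single_of_mul_eq_single [Semiring R] [NoZeroDivisors R] [Add A] [TwoUniqueSums A]
    {f g : R[A]} {m : A} {c : R} (hc : c ≠ 0) (h : f * g = single m c) :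
    ∃ a b u v, a + b = m ∧ u * v = c ∧ f = single a u ∧ g = single b v := by
  classical
  -- a sum attained only once from the supports carries a nonzero coefficient of `f * g`
  have hsum : ∀ a ∈ f.coeff.support, ∀ b ∈ g.coeff.support,
      UniqueAdd f.coeff.support g.coeff.support a b → a + b = m := by
    intro a ha b hb hab
    by_contra hne
    have hcoeff := coeff_mul_add_of_uniqueAdd hab
    rw [h, coeff_single, Finsupp.single_eq_of_ne hne] at hcoeff
    exact mul_ne_zero (Finsupp.mem_support_iff.mp ha) (Finsupp.mem_support_iff.mp hb) hcoeff.symm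
  have hcard : #f.coeff.support * #g.coeff.support ≤ 1 := by
    by_contra! hlt
    obtain ⟨p₁, hp₁, p₂, hp₂, hne, hu₁, hu₂⟩ := TwoUniqueSums.uniqueAdd_of_one_lt_card hlt
    rw [mem_product] at hp₁ hp₂
    have := hu₁ hp₂.1 hp₂.2 ((hsum _ hp₂.1 _ hp₂.2 hu₂).trans (hsum _ hp₁.1 _ hp₁.2 hu₁).symm)
    exact hne (Prod.ext this.1 this.2).symm
  have hfg : f * g ≠ 0 := by simpa [h] using hc
  have hpos : ∀ x : R[A], x ≠ 0 → 0 < #x.coeff.support := fun x hx =>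
    card_pos.mpr (Finsupp.support_nonempty_iff.mpr (by rwa [Ne, coeff_eq_zero]))
  have hf := hpos f (left_ne_zero_of_mul hfg)
  have hg := hpos g (right_ne_zero_of_mul hfg)
  have hsingle : ∀ x : R[A], #x.coeff.support = 1 → ∃ a u, x = single a u := by
    intro x hx
    obtain ⟨a, -, hxa⟩ := Finsupp.card_support_eq_one.mp hx
    exact ⟨a, _, coeff_injective hxa⟩
  obtain ⟨a, u, rfl⟩ := hsingle f (by nlinarith)
  obtain ⟨b, v, rfl⟩ := hsingle g (by nlinarith)
  rw [single_mul_single, single_inj] at h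
  obtain ⟨hab, huv⟩ := h.resolve_right fun h0 => hc h0.2
  exact ⟨a, b, u, v, hab, huv, rfl, rfl⟩

theorem multiset_prod_map_single [CommSemiring R] [AddCommMonoid A] {ι : Type*} (s : Multiset ι)
    (e : ι → A) (u : ι → R) :
    (s.map fun i => single (e i) (u i)).prod = single (s.map e).sum (s.map u).prod := by
  induction s using Multiset.induction_on with
  | empty => rfl
  | cons i s ih => simp [ih, single_mul_single]

section TwoUniqueSums

variable [CommSemiring R] [NoZeroDivisors R] [AddCommMonoid A] [TwoUniqueSums A]

theorem exists_eq_single_of_mem_of_prod_eq_single {l : Multiset R[A]} {m : A} {c : R}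
    (hc : c ≠ 0) (h : l.prod = single m c) {f : R[A]} (hf : f ∈ l) : ∃ a u, f = single a u := by
  obtain ⟨l', rfl⟩ := Multiset.exists_cons_of_mem hf
  rw [Multiset.prod_cons] at h
  obtain ⟨a, -, u, -, -, -, hfa, -⟩ := exists_single_of_mul_eq_single hc h
  exact ⟨a, u, hfa⟩

theorem isUnit_single_iff [Nontrivial R] {m : A} {c : R} :
    IsUnit (single m c) ↔ IsAddUnit m ∧ IsUnit c := by
  constructor
  · intro hu
    obtain ⟨g, hg⟩ := hu.exists_right_inv
    rw [one_def] at hg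
    obtain ⟨a, b, u, v, hab, huv, hfa, -⟩ := exists_single_of_mul_eq_single one_ne_zero hg
    have hc : c ≠ 0 := by rintro rfl; simp at hu
    obtain ⟨rfl, rfl⟩ := (single_inj.mp hfa).resolve_right fun h0 => hc h0.1
    exact ⟨IsAddUnit.of_add_eq_zero _ hab, IsUnit.of_mul_eq_one _ huv⟩
  · rintro ⟨⟨m, rfl⟩, ⟨c, rfl⟩⟩
    exact ⟨⟨single m c, single (-m : AddUnits A) (c⁻¹ : Rˣ), by simp [single_mul_single, one_def],
      by simp [single_mul_single, one_def]⟩, rfl⟩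

theorem irreducible_single_iff [Nontrivial R] {m : A} {c : R} (hc : IsUnit c) :
    Irreducible (single m c) ↔ AddIrreducible m := by
  constructor
  · intro h
    refine ⟨fun hm => h.not_isUnit (isUnit_single_iff.mpr ⟨hm, hc⟩), ?_⟩
    rintro a b rfl
    have hsplit : single (a + b) c = single a c * single b 1 := by rw [single_mul_single, mul_one]
    exact (h.isUnit_or_isUnit hsplit).imp (fun h => (isUnit_single_iff.mp h).1)
      fun h => (isUnit_single_iff.mp h).1
  · intro h
    refine ⟨fun hu => h.not_isAddUnit (isUnit_single_iff.mp hu).1, ?_⟩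
    intro f g hfg
    obtain ⟨a, b, u, v, hab, huv, rfl, rfl⟩ := exists_single_of_mul_eq_single hc.ne_zero hfg.symm
    rw [← huv] at hc
    exact (h.isAddUnit_or_isAddUnit hab.symm).imp
      (fun ha => isUnit_single_iff.mpr ⟨ha, isUnit_of_mul_isUnit_left hc⟩)
      fun hb => isUnit_single_iff.mpr ⟨hb, isUnit_of_mul_isUnit_right hc⟩

end TwoUniqueSums

theorem factorizationLengths_single_one {K : Type*} [Field K] [AddCommMonoid A] [TwoUniqueSums A]
    (m : A) : factorizationLengths (single m (1 : K)) = addFactorizationLengths m := by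
  ext n
  simp only [factorizationLengths, addFactorizationLengths, Set.mem_ofPred_eq]
  constructor
  · rintro ⟨l, rfl, hirr, hprod⟩
    choose! e u he using fun f (hf : f ∈ l) =>
      exists_eq_single_of_mem_of_prod_eq_single one_ne_zero hprod hf
    have hl : l = l.map fun f => single (e f) (u f) :=
      (Multiset.map_id' l).symm.trans (Multiset.map_congr rfl he)
    refine ⟨l.map e, Multiset.card_map _ _, ?_, ?_⟩
    · simp only [Multiset.mem_map]
      rintro _ ⟨f, hf, rfl⟩
      have hfirr := hirr f hf
      rw [he f hf] at hfirr
      refine (irreducible_single_iff (isUnit_iff_ne_zero.mpr ?_)).mp hfirr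
      rintro hu
      rw [hu, single_zero] at hfirr
      exact hfirr.ne_zero rfl
    · rw [hl, multiset_prod_map_single, single_inj] at hprod
      exact (hprod.resolve_right fun h0 => one_ne_zero h0.2).1
  · rintro ⟨s, rfl, hirr, rfl⟩
    refine ⟨s.map fun a => single a 1, Multiset.card_map _ _, ?_, ?_⟩
    · simp only [Multiset.mem_map]
      rintro _ ⟨a, ha, rfl⟩
      exact (irreducible_single_iff isUnit_one).mpr (hirr a ha)
    · rw [multiset_prod_map_single, Multiset.map_id', Multiset.map_const', Multiset.prod_replicate,
        one_pow]

end AddMonoidAlgebra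

theorem dvd_count_of_sum_inv_eq_one {s : Multiset ℕ} (hs : ∀ p ∈ s, p.Prime)
    (h : (s.map fun p : ℕ => (p : ℚ)⁻¹).sum = 1) {r : ℕ} (hr : r ∈ s) : r ∣ s.count r := by
  classical
  set S := s.toFinset
  have hrS : r ∈ S := Multiset.mem_toFinset.mpr hr
  have hprime : ∀ p ∈ S, p.Prime := fun p hp => hs p (Multiset.mem_toFinset.mp hp)
  have hclear : ∑ p ∈ S, s.count p * ∏ q ∈ S.erase p, q = ∏ p ∈ S, p := by
    rw [Finset.sum_multiset_map_count] at h
    apply Nat.cast_injective (R := ℚ)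
    push_cast
    calc ∑ p ∈ S, (s.count p : ℚ) * ∏ q ∈ S.erase p, (q : ℚ)
        = (∑ p ∈ S, s.count p • (p : ℚ)⁻¹) * ∏ q ∈ S, (q : ℚ) := by
          rw [Finset.sum_mul]
          refine Finset.sum_congr rfl fun p hp => ?_
          have hp0 : (p : ℚ) ≠ 0 := Nat.cast_ne_zero.mpr (hprime p hp).ne_zero
          rw [← Finset.mul_prod_erase S _ hp, nsmul_eq_mul]
          field_simp
      _ = ∏ q ∈ S, (q : ℚ) := by rw [h, one_mul]
  -- modulo `r`, only the summand `p = r` survives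
  have hrest : r ∣ ∑ p ∈ S.erase r, s.count p * ∏ q ∈ S.erase p, q :=
    Finset.dvd_sum fun p hp => dvd_mul_of_dvd_right
      (Finset.dvd_prod_of_mem _ (Finset.mem_erase.mpr ⟨(Finset.ne_of_mem_erase hp).symm, hrS⟩)) _
  have hcop : r.Coprime (∏ q ∈ S.erase r, q) := Nat.Coprime.prod_right fun q hq =>
    (Nat.coprime_primes (hprime r hrS) (hprime q (Finset.mem_of_mem_erase hq))).mpr
      (Finset.ne_of_mem_erase hq).symm
  rw [← Finset.add_sum_erase S _ hrS] at hclear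
  exact hcop.dvd_of_dvd_mul_right
    ((Nat.dvd_add_left hrest).mp (hclear ▸ Finset.dvd_prod_of_mem _ hrS))

theorem eq_replicate_of_sum_inv_eq_one {s : Multiset ℕ} (hs : ∀ p ∈ s, p.Prime)
    (h : (s.map fun p : ℕ => (p : ℚ)⁻¹).sum = 1) : ∃ r, r.Prime ∧ s = Multiset.replicate r r := by
  classical
  obtain ⟨r, hr⟩ : ∃ r, r ∈ s := Multiset.exists_mem_of_ne_zero (by rintro rfl; simp at h)
  have hterm : ∀ p ∈ s.toFinset, (1 : ℚ) ≤ s.count p • (p : ℚ)⁻¹ := by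
    intro p hp
    rw [Multiset.mem_toFinset] at hp
    have hpos : (0 : ℚ) < p := Nat.cast_pos.mpr (hs p hp).pos
    have hle : p ≤ s.count p :=
      Nat.le_of_dvd (Multiset.count_pos.mpr hp) (dvd_count_of_sum_inv_eq_one hs h hp)
    rw [nsmul_eq_mul, ← div_eq_mul_inv, one_le_div hpos]
    exact_mod_cast hle
  have hcard : #s.toFinset ≤ 1 := by
    have := Finset.card_nsmul_le_sum _ _ _ hterm
    rw [← Finset.sum_multiset_map_count, h, nsmul_one] at this
    exact_mod_cast this
  have hall : ∀ p ∈ s, p = r := fun p hp =>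
    Finset.card_le_one.mp hcard p (Multiset.mem_toFinset.mpr hp) r (Multiset.mem_toFinset.mpr hr)
  rw [← Multiset.eq_replicate_card] at hall
  refine ⟨r, hs r hr, ?_⟩
  rw [hall] at h ⊢
  simp only [Multiset.map_replicate, Multiset.sum_replicate, nsmul_eq_mul] at h
  have hr0 : (r : ℚ) ≠ 0 := Nat.cast_ne_zero.mpr (hs r hr).ne_zero
  rw [← div_eq_mul_inv, div_eq_one_iff_eq hr0, Nat.cast_inj] at h
  rw [h]

theorem card_eq_one_of_sum_inv_eq_inv {p : ℕ} (hp : p.Prime) {s : Multiset ℕ}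
    (hs : ∀ q ∈ s, q.Prime) (h : (s.map fun q : ℕ => (q : ℚ)⁻¹).sum = (p : ℚ)⁻¹) :
    Multiset.card s = 1 := by
  -- `p` copies of `s` represent `1`
  have hps : ∀ q ∈ p • s, q.Prime := fun q hq => hs q (Multiset.mem_of_mem_nsmul hq)
  have hsum : ((p • s).map fun q : ℕ => (q : ℚ)⁻¹).sum = 1 := by
    rw [Multiset.map_nsmul, Multiset.sum_nsmul, h, nsmul_eq_mul,
      mul_inv_cancel₀ (Nat.cast_ne_zero.mpr hp.ne_zero)]
  obtain ⟨r, hr, hrep⟩ := eq_replicate_of_sum_inv_eq_one hps hsum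
  have hcard : p * Multiset.card s = r := by simpa using congrArg Multiset.card hrep
  rw [← hcard, Nat.prime_mul_iff] at hr
  exact (hr.resolve_right fun h => hp.ne_one h.2).2

namespace primeReciprocalsMonoid

theorem inv_prime_mem {p : ℕ} (hp : p.Prime) : (p : ℚ)⁻¹ ∈ primeReciprocalsMonoid :=
  AddSubmonoid.subset_closure ⟨p, hp, (one_div _).symm⟩

theorem exists_multiset_of_mem {x : ℚ} (hx : x ∈ primeReciprocalsMonoid) :
    ∃ s : Multiset ℕ, (∀ p ∈ s, p.Prime) ∧ (s.map fun p : ℕ => (p : ℚ)⁻¹).sum = x := by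
  obtain ⟨l, hl, rfl⟩ := AddSubmonoid.exists_multiset_of_mem_closure hx
  choose! P hP hPl using hl
  refine ⟨l.map P, by simpa using hP, ?_⟩
  rw [Multiset.map_map]
  congr 1
  conv_rhs => rw [← Multiset.map_id l]
  exact Multiset.map_congr rfl fun y hy => ((hPl y hy).trans (one_div _)).symm

theorem nonneg {x : ℚ} (hx : x ∈ primeReciprocalsMonoid) : 0 ≤ x := by
  obtain ⟨s, -, rfl⟩ := exists_multiset_of_mem hx
  exact Multiset.sum_nonneg fun y hy => by
    obtain ⟨p, -, rfl⟩ := Multiset.mem_map.mp hy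
    positivity

theorem isAddUnit_iff {a : primeReciprocalsMonoid} : IsAddUnit a ↔ a = 0 := by
  refine ⟨fun ha => ?_, fun ha => ha ▸ isAddUnit_zero⟩
  obtain ⟨b, hab⟩ := ha.exists_neg
  have hab' : (a : ℚ) + b = 0 := congrArg Subtype.val hab
  exact Subtype.ext (show (a : ℚ) = 0 by linarith [nonneg a.2, nonneg b.2])

theorem addIrreducible_iff {a : primeReciprocalsMonoid} :
    AddIrreducible a ↔ ∃ p : ℕ, p.Prime ∧ (a : ℚ) = (p : ℚ)⁻¹ := by
  constructor
  · intro ha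
    obtain ⟨s, hs, hsa⟩ := exists_multiset_of_mem a.2
    have hs0 : s ≠ 0 := by
      rintro rfl
      exact ha.not_isAddUnit (isAddUnit_iff.mpr (Subtype.ext hsa.symm))
    obtain ⟨p, hps⟩ := Multiset.exists_mem_of_ne_zero hs0
    obtain ⟨t, rfl⟩ := Multiset.exists_cons_of_mem hps
    have hp := hs p (Multiset.mem_cons_self p t)
    have ht : (t.map fun q : ℕ => (q : ℚ)⁻¹).sum ∈ primeReciprocalsMonoid :=
      AddSubmonoid.multiset_sum_mem _ _ fun y hy => by
        obtain ⟨q, hq, rfl⟩ := Multiset.mem_map.mp hy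
        exact inv_prime_mem (hs q (Multiset.mem_cons_of_mem hq))
    rw [Multiset.map_cons, Multiset.sum_cons] at hsa
    have hsplit : a = ⟨_, inv_prime_mem hp⟩ + ⟨_, ht⟩ := Subtype.ext hsa.symm
    rcases ha.isAddUnit_or_isAddUnit hsplit with h | h <;> rw [isAddUnit_iff] at h
    · exact absurd (congrArg Subtype.val h) (inv_ne_zero (Nat.cast_ne_zero.mpr hp.ne_zero))
    · refine ⟨p, hp, ?_⟩
      rw [← hsa, show (t.map fun q : ℕ => (q : ℚ)⁻¹).sum = 0 from congrArg Subtype.val h, add_zero]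
  · rintro ⟨p, hp, hap⟩
    refine ⟨fun h => ?_, fun b c hbc => ?_⟩
    · rw [isAddUnit_iff] at h
      rw [h] at hap
      exact inv_ne_zero (Nat.cast_ne_zero.mpr hp.ne_zero) hap.symm
    obtain ⟨s, hs, hsb⟩ := exists_multiset_of_mem b.2
    obtain ⟨t, ht, htc⟩ := exists_multiset_of_mem c.2
    have hcard := card_eq_one_of_sum_inv_eq_inv hp (s := s + t)
      (fun q hq => (Multiset.mem_add.mp hq).elim (hs q) (ht q))
      (by rw [Multiset.map_add, Multiset.sum_add, hsb, htc, ← hap, hbc]; rfl)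
    rw [Multiset.card_add] at hcard
    simp only [isAddUnit_iff]
    rcases Nat.add_eq_one_iff.mp hcard with ⟨h0, -⟩ | ⟨-, h0⟩ <;>
      rw [Multiset.card_eq_zero] at h0 <;> subst h0
    · exact .inl (Subtype.ext hsb.symm)
    · exact .inr (Subtype.ext htc.symm)

theorem addFactorizationLengths_one (h1 : (1 : ℚ) ∈ primeReciprocalsMonoid) :
    addFactorizationLengths (⟨1, h1⟩ : primeReciprocalsMonoid) = {n | n.Prime} := by
  ext n
  simp only [addFactorizationLengths, Set.mem_ofPred_eq]
  constructor
  · rintro ⟨s, rfl, hirr, hsum⟩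
    choose! P hP hPs using fun a (ha : a ∈ s) => addIrreducible_iff.mp (hirr a ha)
    have hprime : ∀ p ∈ s.map P, p.Prime := fun p hp => by
      obtain ⟨a, ha, rfl⟩ := Multiset.mem_map.mp hp
      exact hP a ha
    have hsum' : ((s.map P).map fun p : ℕ => (p : ℚ)⁻¹).sum = 1 := by
      have hmap : s.map ((fun p : ℕ => (p : ℚ)⁻¹) ∘ P) = s.map (↑) :=
        Multiset.map_congr rfl fun a ha => (hPs a ha).symm
      rw [Multiset.map_map, hmap, ← AddSubmonoid.coe_multiset_sum, hsum]
    obtain ⟨r, hr, hrep⟩ := eq_replicate_of_sum_inv_eq_one hprime hsum'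
    rwa [← Multiset.card_map P s, hrep, Multiset.card_replicate]
  · intro hn
    refine ⟨Multiset.replicate n ⟨_, inv_prime_mem hn⟩, Multiset.card_replicate _ _,
      fun a ha => addIrreducible_iff.mpr ⟨n, hn, by rw [Multiset.eq_of_mem_replicate ha]⟩, ?_⟩
    refine Subtype.ext ?_
    simp only [Multiset.sum_replicate, AddSubmonoidClass.mk_nsmul, nsmul_eq_mul]
    exact mul_inv_cancel₀ (Nat.cast_ne_zero.mpr hn.ne_zero)

end primeReciprocalsMonoid

/-- Let `M` be the submonoid of `(ℚ, +)` generated by `{1/p : p prime}`,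
`q` a prime, and `x` the monomial of exponent `1` in `𝔽_q[M]`. Then the set of factorization
lengths of `x` is exactly the set of primes; in particular `𝔽_q[M]` is not a bounded
factorization domain. -/
theorem prime_reciprocals_monoid_algebra_not_BFD (q : ℕ) (hq : q.Prime)
    (h1 : (1 : ℚ) ∈ primeReciprocalsMonoid) :
    ({n : ℕ | ∃ l : Multiset (AddMonoidAlgebra (ZMod q) primeReciprocalsMonoid),
        Multiset.card l = n ∧ (∀ y ∈ l, Irreducible y) ∧
        l.prod = AddMonoidAlgebra.single (⟨1, h1⟩ : primeReciprocalsMonoid) (1 : ZMod q)}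
      = {n : ℕ | n.Prime}) ∧
    ¬ (AtomicDomain (AddMonoidAlgebra (ZMod q) primeReciprocalsMonoid) ∧
        ∀ a : AddMonoidAlgebra (ZMod q) primeReciprocalsMonoid, a ≠ 0 → ¬ IsUnit a →
          Set.Finite {n : ℕ | ∃ l : Multiset (AddMonoidAlgebra (ZMod q) primeReciprocalsMonoid),
            Multiset.card l = n ∧ (∀ y ∈ l, Irreducible y) ∧ l.prod = a}) := by
  have : Fact q.Prime := ⟨hq⟩
  have hlengths : factorizationLengths
      (AddMonoidAlgebra.single (⟨1, h1⟩ : primeReciprocalsMonoid) (1 : ZMod q)) = {n | n.Prime} := by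
    rw [AddMonoidAlgebra.factorizationLengths_single_one,
      primeReciprocalsMonoid.addFactorizationLengths_one]
  refine ⟨hlengths, fun ⟨_, hbfd⟩ => Nat.infinite_setOfPred_prime ?_⟩
  rw [← hlengths]
  refine hbfd _ (AddMonoidAlgebra.single_ne_zero.mpr one_ne_zero) fun hu => ?_
  have h0 := primeReciprocalsMonoid.isAddUnit_iff.mp (AddMonoidAlgebra.isUnit_single_iff.mp hu).1
  exact one_ne_zero (congrArg Subtype.val h0)
end
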